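/- arXiv:1709.10189 — 5 statements merged into one kernel-verified Lean document; each statement's English description precedes it below -/
import Mathlib

section
/- Let T(n) denote the number of partitions of n in which each part appears at most 3 times. Then T(n) is odd if and only if n is a triangular number, i.e., n = k(k+1)/2 for some nonnegative integer k. -/
open scoped Classical
open Multiset Finset

noncomputable section

namespace TOddAux

abbrev F2 := ZMod 2


def tri (k : ℕ) : ℕ := k * (k + 1) / 2

lemma two_tri (k : ℕ) : 2 * tri k = k * (k + 1) := by
  have : 2 ∣ k * (k+1) := (Nat.even_mul_succ_self k).two_dvd
  unfold tri; omega

lemma le_tri (k : ℕ) : k ≤ tri k := by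
  have := two_tri k; nlinarith

lemma succ_le_tri {k : ℕ} (hk : 2 ≤ k) : k + 1 ≤ tri k := by
  have := two_tri k; nlinarith

lemma tri_strictMono : StrictMono tri := by
  intro a b h
  have ha := two_tri a; have hb := two_tri b
  nlinarith

/-- staircase sum -/
def st (s : ℕ) : ℕ := ∑ i ∈ Finset.range s, i

lemma two_st (s : ℕ) : 2 * st s + s = s * s := by
  induction s with
  | zero => simp [st]
  | succ n ih =>
    have h1 : st (n+1) = st n + n := Finset.sum_range_succ _ _
    have h2 : (n+1)*(n+1) = n*n + 2*n + 1 := by ring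
    omega

/-- charge -/
def kof (M s : ℕ) : ℕ := if 2*s ≤ M then M - 2*s else 2*s - M - 1

lemma kof_le (M s : ℕ) (hs : s ≤ M) : kof M s ≤ M := by
  unfold kof; split <;> omega

/-- the charge identity: `2·st s + 2·st t + t = st M + tri k` where `t = M - s`. -/
lemma charge_ident (M s : ℕ) (hs : s ≤ M) :
    2 * st s + 2 * st (M - s) + (M - s) = st M + tri (kof M s) := by
  set t := M - s with ht
  have hM : M = s + t := by omega
  have e1 := two_st s
  have e2 := two_st t
  have e3 := two_st M
  rcases le_or_gt (2*s) M with hc | hc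
  · have hk : kof M s = t - s := by unfold kof; rw [if_pos hc]; omega
    set k := kof M s with hkdef
    have e4 := two_tri k
    have hts : t = s + k := by omega
    have r1 : t * t = s*s + 2*(s*k) + k*k := by rw [hts]; ring
    have r2 : M * M = 4*(s*s) + 4*(s*k) + k*k := by rw [hM, hts]; ring
    have r3 : k * (k+1) = k*k + k := by ring
    omega
  · have hk : kof M s = s - t - 1 := by unfold kof; rw [if_neg (by omega)]; omega
    set k := kof M s with hkdef
    have e4 := two_tri k
    have hts : s = t + k + 1 := by omega
    have r1 : s * s = t*t + 2*(t*k) + k*k + 2*t + 2*k + 1 := by rw [hts]; ring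
    have r2 : M * M = 4*(t*t) + 4*(t*k) + k*k + 4*t + 2*k + 1 := by rw [hM, hts]; ring
    have r3 : k * (k+1) = k*k + k := by ring
    omega

/-- index bijection `s ↦ kof M s` on `Fin (M+1)` -/
def sof (M k : ℕ) : ℕ := if 2 ∣ (M - k) then (M - k)/2 else (M + k + 1)/2

lemma sof_le (M k : ℕ) (hk : k ≤ M) : sof M k ≤ M := by
  unfold sof; split_ifs with h <;> omega

lemma kof_sof (M k : ℕ) (hk : k ≤ M) : kof M (sof M k) = k := by
  unfold kof sof
  split_ifs with h1 h2 h2 <;> omega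

lemma sof_kof (M s : ℕ) (hs : s ≤ M) : sof M (kof M s) = s := by
  unfold kof sof
  split_ifs with h1 h2 h2 <;> omega

def idxEquiv (M : ℕ) : Fin (M+1) ≃ Fin (M+1) where
  toFun s := ⟨kof M s.val, by have := kof_le M s.val (by omega); omega⟩
  invFun k := ⟨sof M k.val, by have := sof_le M k.val (by omega); omega⟩
  left_inv s := by ext; exact sof_kof M s.val (by omega)
  right_inv k := by ext; exact kof_sof M k.val (by omega)

/-- cards -/
lemma card_le_sum_of_pos {u : Multiset ℕ} (h : ∀ x ∈ u, 0 < x) : u.card ≤ u.sum := by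
  induction u using Multiset.induction_on with
  | empty => simp
  | cons a s ih =>
    simp only [Multiset.card_cons, Multiset.sum_cons]
    have ha := h a (Multiset.mem_cons_self a s)
    have := ih (fun x hx => h x (Multiset.mem_cons_of_mem hx))
    omega

lemma nat_card_sigma {n : ℕ} (g : Fin n → Type*) [∀ i, Finite (g i)] :
    Nat.card (Σ i, g i) = ∑ i, Nat.card (g i) := by
  letI : ∀ i, Fintype (g i) := fun i => Fintype.ofFinite _
  simp [Nat.card_eq_fintype_card, Fintype.card_sigma]





lemma zmod2_sq (x : F2) : x * x = x := by revert x; decide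

lemma coeff_sq (F : PowerSeries F2) (n : ℕ) :
    (PowerSeries.coeff (R := F2) n) (F * F) =
      if 2 ∣ n then (PowerSeries.coeff (R := F2) (n/2)) F else 0 := by
  rw [PowerSeries.coeff_mul]
  rw [← Finset.sum_filter_add_sum_filter_not (antidiagonal n) (fun x => x.1 = x.2)]
  have h2 : ∑ x ∈ (antidiagonal n).filter (fun x => ¬ x.1 = x.2),
      (PowerSeries.coeff (R := F2) x.1) F * (PowerSeries.coeff (R := F2) x.2) F = 0 := by
    apply Finset.sum_involution (fun x _ => (x.2, x.1))
    · intro a _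
      have : ∀ y : F2, y + y = 0 := by decide
      rw [mul_comm]; exact this _
    · intro a ha _
      simp only [Finset.mem_filter] at ha
      intro h
      exact ha.2 (congrArg Prod.fst h).symm
    · intro a ha
      simp only [Finset.mem_filter, Finset.HasAntidiagonal.mem_antidiagonal] at *
      omega
    · intro a ha; rfl
  rw [h2, add_zero]
  by_cases hn : 2 ∣ n
  · have : (antidiagonal n).filter (fun x => x.1 = x.2) = {(n/2, n/2)} := by
      ext x; simp only [Finset.mem_filter, Finset.HasAntidiagonal.mem_antidiagonal, Finset.mem_singleton,
        Prod.ext_iff]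
      omega
    rw [this, Finset.sum_singleton, zmod2_sq, if_pos hn]
  · have : (antidiagonal n).filter (fun x => x.1 = x.2) = ∅ := by
      ext x; simp only [Finset.mem_filter, Finset.HasAntidiagonal.mem_antidiagonal, Finset.notMem_empty,
        iff_false, not_and]
      omega
    rw [this, Finset.sum_empty, if_neg hn]



lemma stairs_le {s : ℕ} (f : Fin s → ℕ) (hf : StrictMono f) (i : Fin s) : i.val ≤ f i := by
  induction' h : i.val with j ih generalizing i
  · exact Nat.zero_le _
  · have hj : j < s := by omega
    have h1 : j ≤ f ⟨j, hj⟩ := by simpa using ih ⟨j, hj⟩ rfl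
    have h2 : f ⟨j, hj⟩ < f i := hf (by rw [Fin.lt_def]; simp; omega)
    omega

lemma stairs_add {s : ℕ} (f : Fin s → ℕ) (hf : StrictMono f) (i j : Fin s) (hij : i ≤ j) :
    f i + j.val ≤ f j + i.val := by
  obtain ⟨d, hd⟩ : ∃ d, j.val = i.val + d := ⟨j.val - i.val, by have := Fin.le_def.1 hij; omega⟩
  induction' d with d ih generalizing j
  · have : i = j := Fin.ext (by omega)
    subst this; omega
  · have hj' : i.val + d < s := by have := j.2; omega
    have h1 : f i + (i.val + d) ≤ f ⟨i.val + d, hj'⟩ + i.val := by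
      simpa using ih ⟨i.val + d, hj'⟩ (by rw [Fin.le_def]; simp) rfl
    have h2 : f ⟨i.val + d, hj'⟩ < f j := hf (by rw [Fin.lt_def]; simp; omega)
    omega

/-! ### The core staircase bijection -/

def FA (s : ℕ) := {A : Finset ℕ // A.card = s}
def FU (s : ℕ) := {u : Multiset ℕ // (∀ x ∈ u, 0 < x) ∧ u.card ≤ s}

variable {s : ℕ}

def emb (A : FA s) : Fin s → ℕ := A.1.orderEmbOfFin A.2

lemma emb_strictMono (A : FA s) : StrictMono (emb A) :=
  (A.1.orderEmbOfFin A.2).strictMono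

lemma emb_image (A : FA s) : Finset.image (emb A) Finset.univ = A.1 := by
  ext x
  simp only [Finset.mem_image, Finset.mem_univ, true_and]
  constructor
  · rintro ⟨i, rfl⟩; exact Finset.orderEmbOfFin_mem _ _ _
  · intro hx
    have : x ∈ Set.range (A.1.orderEmbOfFin A.2) := by
      rw [Finset.range_orderEmbOfFin]; exact hx
    obtain ⟨i, hi⟩ := this
    exact ⟨i, hi⟩

def dn (A : FA s) : List ℕ := List.ofFn fun i : Fin s => emb A i - i.val

lemma dn_length (A : FA s) : (dn A).length = s := by simp [dn]

lemma dn_sorted (A : FA s) : (dn A).Pairwise (· ≤ ·) := by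
  rw [dn, List.pairwise_ofFn]
  intro i j hij
  have := stairs_add (emb A) (emb_strictMono A) i j (le_of_lt hij)
  have := stairs_le (emb A) (emb_strictMono A) i
  have := stairs_le (emb A) (emb_strictMono A) j
  omega

def fwd (A : FA s) : FU s :=
  ⟨(↑(dn A) : Multiset ℕ).filter (0 < ·), by
    constructor
    · intro x hx; exact (Multiset.mem_filter.1 hx).2
    · calc ((↑(dn A) : Multiset ℕ).filter (0 < ·)).card ≤ (↑(dn A) : Multiset ℕ).card :=
            Multiset.card_le_card (Multiset.filter_le _ _)
        _ = s := by simp [dn]⟩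

def pad (u : FU s) : Multiset ℕ := u.1 + Multiset.replicate (s - u.1.card) 0

lemma pad_card (u : FU s) : (pad u).card = s := by
  have := u.2.2
  simp only [pad, Multiset.card_add, Multiset.card_replicate]
  omega

def upL (u : FU s) : List ℕ := (pad u).sort (· ≤ ·)

lemma upL_length (u : FU s) : (upL u).length = s := by
  rw [upL, Multiset.length_sort, pad_card]

def up (u : FU s) (i : Fin s) : ℕ := (upL u).get (Fin.cast (upL_length u).symm i) + i.val

lemma up_strictMono (u : FU s) : StrictMono (up u) := by
  intro i j hij
  have hs : (upL u).Pairwise (· ≤ ·) := Multiset.pairwise_sort _ _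
  have : (upL u).get (Fin.cast (upL_length u).symm i) ≤
      (upL u).get (Fin.cast (upL_length u).symm j) := by
    apply hs.rel_get_of_le
    rw [Fin.le_def]
    simp only [Fin.coe_cast]
    exact le_of_lt hij
  have hij' : i.val < j.val := hij
  simp only [up]
  omega

def bwd (u : FU s) : FA s :=
  ⟨Finset.image (up u) Finset.univ, by
    rw [Finset.card_image_of_injective _ (up_strictMono u).injective, Finset.card_univ,
      Fintype.card_fin]⟩



variable {s : ℕ}

lemma pad_fwd (A : FA s) : pad (fwd A) = (↑(dn A) : Multiset ℕ) := by
  have hsplit : ((↑(dn A) : Multiset ℕ).filter (0 < ·)) +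
      ((↑(dn A) : Multiset ℕ).filter (fun x => ¬ 0 < x)) = (↑(dn A) : Multiset ℕ) :=
    Multiset.filter_add_not _ _
  have hrep : ((↑(dn A) : Multiset ℕ).filter (fun x => ¬ 0 < x)) =
      Multiset.replicate (s - (fwd A).1.card) 0 := by
    rw [Multiset.eq_replicate]
    constructor
    · have hc : (↑(dn A) : Multiset ℕ).card = s := by simp [dn]
      have hcc := congrArg Multiset.card hsplit
      simp only [Multiset.card_add] at hcc
      have hfwd : (fwd A).1 = (↑(dn A) : Multiset ℕ).filter (0 < ·) := rfl
      rw [hfwd]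
      omega
    · intro b hb
      have := (Multiset.mem_filter.1 hb).2
      omega
  rw [pad]
  show (↑(dn A) : Multiset ℕ).filter (0 < ·) + Multiset.replicate (s - (fwd A).1.card) 0 = _
  rw [← hrep, hsplit]

lemma upL_fwd (A : FA s) : upL (fwd A) = dn A := by
  apply List.Perm.eq_of_pairwise' (Multiset.pairwise_sort _ _) (dn_sorted A) ?_
  rw [← Multiset.coe_eq_coe, Multiset.sort_eq, pad_fwd]

lemma up_fwd (A : FA s) (i : Fin s) : up (fwd A) i = emb A i := by
  have hle := stairs_le (emb A) (emb_strictMono A) i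
  rw [up]
  have hget : (upL (fwd A)).get (Fin.cast (upL_length _).symm i) = emb A i - i.val := by
    have h1 := upL_fwd A
    rw [List.get_of_eq h1]
    simp [dn, List.get_ofFn]
  rw [hget]; omega

lemma bwd_fwd (A : FA s) : bwd (fwd A) = A := by
  apply Subtype.ext
  show Finset.image (up (fwd A)) Finset.univ = A.1
  rw [show up (fwd A) = emb A from funext (up_fwd A), emb_image]

lemma emb_bwd (u : FU s) : emb (bwd u) = up u :=
  (Finset.orderEmbOfFin_unique (bwd u).2
    (fun x => Finset.mem_image_of_mem _ (Finset.mem_univ x)) (up_strictMono u)).symm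

lemma fwd_bwd (u : FU s) : fwd (bwd u) = u := by
  apply Subtype.ext
  have h1 : dn (bwd u) = upL u := by
    rw [dn]
    apply List.ext_get
    · simp [upL_length]
    · intro n h1' h2'
      have hn : n < s := by simpa using h1'
      have he : emb (bwd u) ⟨n, hn⟩ = up u ⟨n, hn⟩ := congrFun (emb_bwd u) _
      have hup : up u ⟨n, hn⟩ = (upL u).get ⟨n, h2'⟩ + n := rfl
      rw [List.get_ofFn]
      show emb (bwd u) ⟨n, hn⟩ - n = (upL u).get ⟨n, h2'⟩
      rw [he, hup]
      omega
  show (↑(dn (bwd u)) : Multiset ℕ).filter _ = u.1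
  rw [h1]
  have : (↑(upL u) : Multiset ℕ) = pad u := Multiset.sort_eq _ _
  rw [this, pad, Multiset.filter_add]
  have h2 : (Multiset.replicate (s - u.1.card) 0).filter (0 < ·) = 0 := by
    rw [Multiset.filter_eq_nil]
    intro a ha
    have := Multiset.eq_of_mem_replicate ha
    omega
  have h3 : u.1.filter (0 < ·) = u.1 := by
    rw [Multiset.filter_eq_self]
    exact u.2.1
  rw [h2, h3, add_zero]

lemma fwd_sum (A : FA s) : (fwd A).1.sum + (∑ i ∈ Finset.range s, i) = A.1.sum id := by
  have hsum1 : (fwd A).1.sum = (↑(dn A) : Multiset ℕ).sum := by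
    have hsplit := Multiset.filter_add_not (fun x => 0 < x) (↑(dn A) : Multiset ℕ)
    have := congrArg Multiset.sum hsplit
    rw [Multiset.sum_add] at this
    have hz : ((↑(dn A) : Multiset ℕ).filter (fun x => ¬ 0 < x)).sum = 0 := by
      apply Multiset.sum_eq_zero
      intro x hx
      have := (Multiset.mem_filter.1 hx).2
      omega
    show ((↑(dn A) : Multiset ℕ).filter (fun x => 0 < x)).sum = _
    omega
  have hsum2 : (↑(dn A) : Multiset ℕ).sum = ∑ i : Fin s, (emb A i - i.val) := by
    simp [dn, Multiset.sum_coe, List.sum_ofFn]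
  have hsum3 : ∑ i ∈ Finset.range s, i = ∑ i : Fin s, i.val :=
    (Fin.sum_univ_eq_sum_range (fun i => i) s).symm
  have hsum4 : ∑ i : Fin s, (emb A i - i.val) + ∑ i : Fin s, i.val = ∑ i : Fin s, emb A i := by
    rw [← Finset.sum_add_distrib]
    apply Finset.sum_congr rfl
    intro i _
    have := stairs_le (emb A) (emb_strictMono A) i
    omega
  have hsum5 : A.1.sum id = ∑ i : Fin s, emb A i := by
    rw [← emb_image A]
    rw [Finset.sum_image (fun x _ y _ h => (emb_strictMono A).injective h)]
    rfl
  rw [hsum1, hsum2, hsum3, hsum5, hsum4]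

/-- the core equivalence -/
def coreEquiv (s : ℕ) : FA s ≃ FU s where
  toFun := fwd
  invFun := bwd
  left_inv := bwd_fwd
  right_inv := fwd_bwd



def ev (A : Finset ℕ) : Finset ℕ := (A.filter (fun x => 2 ∣ x)).image (·/2)
def od (A : Finset ℕ) : Finset ℕ := (A.filter (fun x => ¬ 2 ∣ x)).image (·/2)
def un (E F : Finset ℕ) : Finset ℕ := E.image (fun x => 2*x) ∪ F.image (fun x => 2*x+1)

lemma mem_ev {A : Finset ℕ} {x : ℕ} : x ∈ ev A ↔ 2*x ∈ A := by
  simp only [ev, Finset.mem_image, Finset.mem_filter]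
  constructor
  · rintro ⟨y, ⟨hy, hdvd⟩, rfl⟩
    have : 2 * (y/2) = y := by omega
    rwa [this]
  · intro h
    exact ⟨2*x, ⟨h, ⟨x, rfl⟩⟩, by omega⟩

lemma mem_od {A : Finset ℕ} {x : ℕ} : x ∈ od A ↔ 2*x+1 ∈ A := by
  simp only [od, Finset.mem_image, Finset.mem_filter]
  constructor
  · rintro ⟨y, ⟨hy, hdvd⟩, rfl⟩
    have : 2 * (y/2) + 1 = y := by omega
    rwa [this]
  · intro h
    exact ⟨2*x+1, ⟨h, by omega⟩, by omega⟩

lemma mem_un {E F : Finset ℕ} {y : ℕ} :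
    y ∈ un E F ↔ ((2 ∣ y ∧ y/2 ∈ E) ∨ (¬ 2 ∣ y ∧ y/2 ∈ F)) := by
  simp only [un, Finset.mem_union, Finset.mem_image]
  constructor
  · rintro (⟨x, hx, rfl⟩ | ⟨x, hx, rfl⟩)
    · left; exact ⟨⟨x, rfl⟩, by simpa [Nat.mul_div_cancel_left] using hx⟩
    · right; exact ⟨by omega, by rw [show (2*x+1)/2 = x by omega]; exact hx⟩
  · rintro (⟨hdvd, hy⟩ | ⟨hdvd, hy⟩)
    · left; exact ⟨y/2, hy, by omega⟩
    · right; exact ⟨y/2, hy, by omega⟩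

lemma ev_un (E F : Finset ℕ) : ev (un E F) = E := by
  ext x
  rw [mem_ev, mem_un]
  constructor
  · rintro (⟨_, h⟩ | ⟨h, _⟩)
    · rwa [show 2*x/2 = x by omega] at h
    · exact absurd ⟨x, rfl⟩ h
  · intro h
    left; exact ⟨⟨x, rfl⟩, by rwa [show 2*x/2 = x by omega]⟩

lemma od_un (E F : Finset ℕ) : od (un E F) = F := by
  ext x
  rw [mem_od, mem_un]
  constructor
  · rintro (⟨h, _⟩ | ⟨_, h⟩)
    · exact absurd h (by omega)
    · rwa [show (2*x+1)/2 = x by omega] at h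
  · intro h
    right; exact ⟨by omega, by rwa [show (2*x+1)/2 = x by omega]⟩

lemma un_ev_od (A : Finset ℕ) : un (ev A) (od A) = A := by
  ext y
  rw [mem_un, mem_ev, mem_od]
  constructor
  · rintro (⟨hdvd, h⟩ | ⟨hdvd, h⟩)
    · rwa [show 2*(y/2) = y by omega] at h
    · rwa [show 2*(y/2)+1 = y by omega] at h
  · intro h
    by_cases hdvd : 2 ∣ y
    · left; exact ⟨hdvd, by rwa [show 2*(y/2) = y by omega]⟩
    · right; exact ⟨hdvd, by rwa [show 2*(y/2)+1 = y by omega]⟩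

lemma card_ev_od (A : Finset ℕ) : (ev A).card + (od A).card = A.card := by
  have h1 : (ev A).card = (A.filter (fun x => 2 ∣ x)).card := by
    apply Finset.card_image_of_injOn (by
    intro x hx y hy hxy
    simp only [Finset.mem_coe, Finset.mem_filter] at hx hy
    dsimp only at hxy
    omega)
  have h2 : (od A).card = (A.filter (fun x => ¬ 2 ∣ x)).card := by
    apply Finset.card_image_of_injOn (by
    intro x hx y hy hxy
    simp only [Finset.mem_coe, Finset.mem_filter] at hx hy
    dsimp only at hxy
    omega)
  rw [h1, h2, Finset.card_filter_add_card_filter_not]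

lemma sum_ev_od (A : Finset ℕ) :
    2 * (ev A).sum id + (2 * (od A).sum id + (od A).card) = A.sum id := by
  have h1 : (ev A).sum id = (A.filter (fun x => 2 ∣ x)).sum (·/2) := by
    rw [ev, Finset.sum_image (by
    intro x hx y hy hxy
    simp only [Finset.mem_coe, Finset.mem_filter] at hx hy
    dsimp only at hxy
    omega)]
    simp
  have h2 : (od A).sum id = (A.filter (fun x => ¬ 2 ∣ x)).sum (·/2) := by
    rw [od, Finset.sum_image (by
    intro x hx y hy hxy
    simp only [Finset.mem_coe, Finset.mem_filter] at hx hy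
    dsimp only at hxy
    omega)]
    simp
  have h1' : 2 * (ev A).sum id = (A.filter (fun x => 2 ∣ x)).sum id := by
    rw [h1, Finset.mul_sum]
    apply Finset.sum_congr rfl
    intro x hx
    have := (Finset.mem_filter.1 hx).2
    simp only [id]
    omega
  have hcard : (od A).card = (A.filter (fun x => ¬ 2 ∣ x)).card := by
    apply Finset.card_image_of_injOn (by
    intro x hx y hy hxy
    simp only [Finset.mem_coe, Finset.mem_filter] at hx hy
    dsimp only at hxy
    omega)
  have h2' : 2 * (od A).sum id + (od A).card = (A.filter (fun x => ¬ 2 ∣ x)).sum id := by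
    rw [h2, hcard, Finset.mul_sum, Finset.card_eq_sum_ones, ← Finset.sum_add_distrib]
    apply Finset.sum_congr rfl
    intro x hx
    have := (Finset.mem_filter.1 hx).2
    simp only [id]
    omega
  rw [h1', h2']
  rw [← Finset.sum_filter_add_sum_filter_not A (fun x => 2 ∣ x) id]




/-- ### counting types -/
def Part (a : ℕ) := {u : Multiset ℕ // (∀ x ∈ u, 0 < x) ∧ u.sum = a}

/-- pairs of partitions with total sum `m` -/
def PPair (m : ℕ) := {w : Multiset ℕ × Multiset ℕ //
  (∀ x ∈ w.1, 0 < x) ∧ (∀ x ∈ w.2, 0 < x) ∧ w.1.sum + w.2.sum = m}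

/-- pairs of partitions with `tri k + 2(sum) = M` -/
def Fib (M k : ℕ) := {w : Multiset ℕ × Multiset ℕ //
  (∀ x ∈ w.1, 0 < x) ∧ (∀ x ∈ w.2, 0 < x) ∧ tri k + 2*(w.1.sum + w.2.sum) = M}

def eqPart (a : ℕ) : Nat.Partition a ≃ Part a where
  toFun p := ⟨p.parts, fun _ hx => p.parts_pos hx, p.parts_sum⟩
  invFun u := ⟨u.1, fun {_} hx => u.2.1 _ hx, u.2.2⟩
  left_inv p := rfl
  right_inv u := rfl

instance (a : ℕ) : Finite (Part a) := Finite.of_equiv _ (eqPart a)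

lemma card_Part (a : ℕ) : Nat.card (Part a) = Nat.card (Nat.Partition a) :=
  (Nat.card_congr (eqPart a)).symm

/-- decompose `PPair` by the sum of the first component -/
def ppairFiber (m : ℕ) (x : ℕ × ℕ) := {w : PPair m // w.1.1.sum = x.1 ∧ w.1.2.sum = x.2}

def ppairFiberEquiv (m : ℕ) (x : ℕ × ℕ) (hx : x ∈ antidiagonal m) :
    ppairFiber m x ≃ Part x.1 × Part x.2 where
  toFun w := (⟨w.1.1.1, w.1.2.1, w.2.1⟩, ⟨w.1.1.2, w.1.2.2.1, w.2.2⟩)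
  invFun uv := ⟨⟨(uv.1.1, uv.2.1), uv.1.2.1, uv.2.2.1, by
      rw [uv.1.2.2, uv.2.2.2]; exact Finset.HasAntidiagonal.mem_antidiagonal.1 hx⟩, uv.1.2.2, uv.2.2.2⟩
  left_inv w := by apply Subtype.ext; apply Subtype.ext; rfl
  right_inv uv := by
    apply Prod.ext
    · apply Subtype.ext; rfl
    · apply Subtype.ext; rfl

def ppairSigma (m : ℕ) : PPair m ≃ Σ x : (antidiagonal m : Finset (ℕ × ℕ)), ppairFiber m x.1 :=
  (Equiv.sigmaFiberEquiv (fun w : PPair m =>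
    (⟨(w.1.1.sum, w.1.2.sum), Finset.HasAntidiagonal.mem_antidiagonal.2 w.2.2.2⟩ :
      (antidiagonal m : Finset (ℕ × ℕ))))).symm.trans
  (Equiv.sigmaCongrRight (fun x => Equiv.subtypeEquivRight (fun w => by
    constructor
    · intro h
      have h1 := congrArg (fun y => (Subtype.val y).1) h
      have h2 := congrArg (fun y => (Subtype.val y).2) h
      exact ⟨h1, h2⟩
    · intro h
      apply Subtype.ext
      exact Prod.ext h.1 h.2)))

instance (m : ℕ) : Finite (PPair m) := by
  have e := ppairSigma m
  have : ∀ x : (antidiagonal m : Finset (ℕ × ℕ)), Finite (ppairFiber m x.1) := by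
    intro x
    exact Finite.of_equiv _ (ppairFiberEquiv m x.1 x.2).symm
  exact Finite.of_equiv _ e.symm

lemma card_PPair (m : ℕ) :
    Nat.card (PPair m) = ∑ x ∈ antidiagonal m, Nat.card (Nat.Partition x.1) * Nat.card (Nat.Partition x.2) := by
  have : ∀ x : (antidiagonal m : Finset (ℕ × ℕ)), Finite (ppairFiber m x.1) :=
    fun x => Finite.of_equiv _ (ppairFiberEquiv m x.1 x.2).symm
  rw [Nat.card_congr (ppairSigma m)]
  letI : ∀ x : (antidiagonal m : Finset (ℕ × ℕ)), Fintype (ppairFiber m x.1) :=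
    fun x => Fintype.ofFinite _
  rw [Nat.card_eq_fintype_card, Fintype.card_sigma]
  rw [← Finset.sum_attach (antidiagonal m)
    (fun x => Nat.card (Nat.Partition x.1) * Nat.card (Nat.Partition x.2))]
  apply Finset.sum_congr rfl
  intro x _
  rw [← Nat.card_eq_fintype_card, Nat.card_congr (ppairFiberEquiv m x.1 x.2),
    Nat.card_prod, card_Part, card_Part]


/-! ### Fib facts -/

lemma fib_elim {M k : ℕ} (w : Fib M k) : tri k ≤ M ∧ 2 ∣ (M - tri k) := by
  have := w.2.2.2
  omega

def fibPPair (M k : ℕ) (h1 : tri k ≤ M) (h2 : 2 ∣ (M - tri k)) :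
    Fib M k ≃ PPair ((M - tri k)/2) :=
  Equiv.subtypeEquivRight (fun w => by
    constructor
    · rintro ⟨p1, p2, p3⟩; exact ⟨p1, p2, by omega⟩
    · rintro ⟨p1, p2, p3⟩; exact ⟨p1, p2, by omega⟩)

instance (M k : ℕ) : Finite (Fib M k) := by
  by_cases h : tri k ≤ M ∧ 2 ∣ (M - tri k)
  · exact Finite.of_equiv _ (fibPPair M k h.1 h.2).symm
  · have : IsEmpty (Fib M k) := ⟨fun w => h (fib_elim w)⟩
    infer_instance

/-! ### master bijection (2-core/2-quotient) -/

def EFty (M W : ℕ) := {EF : Finset ℕ × Finset ℕ //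
  EF.1.card + EF.2.card = M ∧ 2 * EF.1.sum id + (2 * EF.2.sum id + EF.2.card) = W}

def EFfib (M W s : ℕ) := {EF : Finset ℕ × Finset ℕ //
  EF.1.card = s ∧ EF.2.card = M - s ∧ 2 * EF.1.sum id + (2 * EF.2.sum id + EF.2.card) = W}

def e2 (M : ℕ) : Part M ≃ {u : FU M // u.1.sum = M} where
  toFun u := ⟨⟨u.1, u.2.1, le_trans (card_le_sum_of_pos u.2.1) (le_of_eq u.2.2)⟩, u.2.2⟩
  invFun w := ⟨w.1.1, w.1.2.1, w.2⟩
  left_inv u := rfl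
  right_inv w := rfl

def e3 (M : ℕ) : {u : FU M // u.1.sum = M} ≃ {A : FA M // A.1.sum id = M + st M} :=
  ((coreEquiv M).subtypeEquiv (fun A => by
    have hE : (fwd A).1.sum + st M = A.1.sum id := fwd_sum A
    show A.1.sum id = M + st M ↔ (fwd A).1.sum = M
    omega)).symm

def e4 (M W : ℕ) : {A : FA M // A.1.sum id = W} ≃ {A : Finset ℕ // A.card = M ∧ A.sum id = W} where
  toFun x := ⟨x.1.1, x.1.2, x.2⟩
  invFun y := ⟨⟨y.1, y.2.1⟩, y.2.2⟩
  left_inv x := rfl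
  right_inv y := rfl

def e5 (M W : ℕ) : {A : Finset ℕ // A.card = M ∧ A.sum id = W} ≃ EFty M W where
  toFun A := ⟨(ev A.1, od A.1), by
      have h1 := card_ev_od A.1
      have h2 := sum_ev_od A.1
      exact ⟨by rw [h1]; exact A.2.1, by rw [h2]; exact A.2.2⟩⟩
  invFun EF := ⟨un EF.1.1 EF.1.2, by
      have h1 := card_ev_od (un EF.1.1 EF.1.2)
      have h2 := sum_ev_od (un EF.1.1 EF.1.2)
      rw [ev_un, od_un] at h1 h2
      have := EF.2.1
      have := EF.2.2
      omega⟩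
  left_inv A := Subtype.ext (un_ev_od A.1)
  right_inv EF := Subtype.ext (Prod.ext (ev_un EF.1.1 EF.1.2) (od_un EF.1.1 EF.1.2))

def e6fib (M W : ℕ) (s : Fin (M+1)) :
    {w : EFty M W // w.1.1.card = s.val} ≃ EFfib M W s.val where
  toFun w := ⟨w.1.1, w.2, by have := w.1.2.1; omega, w.1.2.2⟩
  invFun w := ⟨⟨w.1, by have := w.2.1; have := w.2.2.1; have := s.2; omega, w.2.2.2⟩, w.2.1⟩
  left_inv w := Subtype.ext (Subtype.ext rfl)
  right_inv w := Subtype.ext rfl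

def e6 (M W : ℕ) : EFty M W ≃ Σ s : Fin (M+1), EFfib M W s.val :=
  ((Equiv.sigmaFiberEquiv (fun w : EFty M W =>
      (⟨w.1.1.card, by have := w.2.1; omega⟩ : Fin (M+1)))).symm.trans
    (Equiv.sigmaCongrRight (fun s =>
      ((Equiv.subtypeEquivRight (fun w => by
          rw [Fin.ext_iff])).trans (e6fib M W s)))))


lemma bwd_fwd' {s : ℕ} (A : Finset ℕ) (h : A.card = s)
    (h' : (∀ x ∈ (fwd (⟨A, h⟩ : FA s)).1, 0 < x) ∧ (fwd (⟨A, h⟩ : FA s)).1.card ≤ s) :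
    (bwd (⟨(fwd (⟨A, h⟩ : FA s)).1, h'⟩ : FU s)).1 = A := by
  have heq : (⟨(fwd (⟨A, h⟩ : FA s)).1, h'⟩ : FU s) = fwd (⟨A, h⟩ : FA s) := Subtype.ext rfl
  rw [heq]; exact congrArg Subtype.val (bwd_fwd (⟨A, h⟩ : FA s))

lemma fwd_bwd' {s : ℕ} (u : Multiset ℕ) (h : (∀ x ∈ u, 0 < x) ∧ u.card ≤ s)
    (h' : (bwd (⟨u, h⟩ : FU s)).1.card = s) :
    (fwd (⟨(bwd (⟨u, h⟩ : FU s)).1, h'⟩ : FA s)).1 = u := by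
  have heq : (⟨(bwd (⟨u, h⟩ : FU s)).1, h'⟩ : FA s) = bwd (⟨u, h⟩ : FU s) := Subtype.ext rfl
  rw [heq]; exact congrArg Subtype.val (fwd_bwd (⟨u, h⟩ : FU s))

lemma fib_bounds (M s X : ℕ) (hs : s ≤ M) (hX : tri (kof M s) + 2*X = M) :
    X ≤ s ∧ X ≤ M - s := by
  have hk := le_tri (kof M s)
  rcases le_or_gt (2*s) M with h | h
  · have hkk : kof M s = M - 2*s := by unfold kof; rw [if_pos h]
    rw [hkk] at hX hk
    omega
  · have hkk : kof M s = 2*s - M - 1 := by unfold kof; rw [if_neg (by omega)]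
    rw [hkk] at hX hk
    by_cases hk0 : 2*s - M - 1 = 0
    · rw [hk0] at hX; have h0 : tri 0 = 0 := rfl; omega
    by_cases hk1 : 2*s - M - 1 = 1
    · rw [hk1] at hX; have h1 : tri 1 = 1 := rfl; omega
    have h2 : 2 ≤ 2*s - M - 1 := by omega
    have := succ_le_tri h2
    omega

def e7 (M : ℕ) (s : Fin (M+1)) : EFfib M (M + st M) s.val ≃ Fib M (kof M s.val) where
  toFun w :=
    ⟨((fwd (⟨w.1.1, w.2.1⟩ : FA s.val)).1, (fwd (⟨w.1.2, w.2.2.1⟩ : FA (M - s.val))).1),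
      (fwd (⟨w.1.1, w.2.1⟩ : FA s.val)).2.1,
      (fwd (⟨w.1.2, w.2.2.1⟩ : FA (M - s.val))).2.1, by
      have hE : (fwd (⟨w.1.1, w.2.1⟩ : FA s.val)).1.sum + st s.val = w.1.1.sum id :=
        fwd_sum _
      have hF : (fwd (⟨w.1.2, w.2.2.1⟩ : FA (M - s.val))).1.sum + st (M - s.val) =
          w.1.2.sum id := fwd_sum _
      have hch := charge_ident M s.val (by have := s.2; omega)
      have hsum := w.2.2.2
      have hcF := w.2.2.1
      show tri (kof M s.val) + 2*((fwd (⟨w.1.1, w.2.1⟩ : FA s.val)).1.sum +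
        (fwd (⟨w.1.2, w.2.2.1⟩ : FA (M - s.val))).1.sum) = M
      omega⟩
  invFun w :=
    have hb := fib_bounds M s.val (w.1.1.sum + w.1.2.sum) (by have := s.2; omega) w.2.2.2
    let u : FU s.val := ⟨w.1.1, w.2.1,
      le_trans (card_le_sum_of_pos w.2.1) (by omega)⟩
    let v : FU (M - s.val) := ⟨w.1.2, w.2.2.1,
      le_trans (card_le_sum_of_pos w.2.2.1) (by omega)⟩
    ⟨((bwd u).1, (bwd v).1), (bwd u).2, (bwd v).2, by
      have h1 : w.1.1.sum + st s.val = (bwd u).1.sum id := by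
        have := fwd_sum (bwd u); rw [fwd_bwd] at this; exact this
      have h2 : w.1.2.sum + st (M - s.val) = (bwd v).1.sum id := by
        have := fwd_sum (bwd v); rw [fwd_bwd] at this; exact this
      have hch := charge_ident M s.val (by have := s.2; omega)
      have heq := w.2.2.2
      show 2 * (bwd u).1.sum id + (2 * (bwd v).1.sum id + (bwd v).1.card) = M + st M
      rw [(bwd v).2]
      omega⟩
  left_inv w := by
    apply Subtype.ext
    apply Prod.ext
    · exact bwd_fwd' _ _ _
    · exact bwd_fwd' _ _ _
  right_inv w := by
    apply Subtype.ext
    apply Prod.ext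
    · exact fwd_bwd' _ _ _
    · exact fwd_bwd' _ _ _

def master (M : ℕ) : Nat.Partition M ≃ Σ k : Fin (M+1), Fib M k.val :=
  (eqPart M).trans ((e2 M).trans ((e3 M).trans ((e4 M (M + st M)).trans
    ((e5 M (M + st M)).trans ((e6 M (M + st M)).trans
      (Equiv.sigmaCongr (idxEquiv M) (fun s => e7 M s)))))))

/-! ### power series -/

def pcount (n : ℕ) : ℕ := Nat.card (Nat.Partition n)

def Tcount (n : ℕ) : ℕ := Nat.card {p : Nat.Partition n // ∀ i, p.parts.count i ≤ 3}

def pS : PowerSeries F2 := PowerSeries.mk fun n => (pcount n : F2)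
def tS : PowerSeries F2 := PowerSeries.mk fun n => (Tcount n : F2)
def sS : PowerSeries F2 := PowerSeries.mk fun n => if ∃ k, tri k = n then 1 else 0
def dS : PowerSeries F2 := PowerSeries.mk fun n => if 2 ∣ n then (pcount (n/2) : F2) else 0
def uS : PowerSeries F2 := PowerSeries.mk fun n => if 4 ∣ n then (pcount (n/4) : F2) else 0

lemma pS_sq : pS * pS = dS := by
  apply PowerSeries.ext
  intro n
  rw [coeff_sq]
  simp only [dS, PowerSeries.coeff_mk]
  by_cases h : 2 ∣ n
  · rw [if_pos h, if_pos h]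
    simp only [pS, PowerSeries.coeff_mk, pcount]
  · rw [if_neg h, if_neg h]

lemma pS_four : (pS * pS) * (pS * pS) = uS := by
  apply PowerSeries.ext
  intro n
  rw [coeff_sq]
  simp only [uS, PowerSeries.coeff_mk]
  by_cases h : 2 ∣ n
  · rw [if_pos h, pS_sq]
    simp only [dS, PowerSeries.coeff_mk]
    by_cases h2 : 2 ∣ (n/2)
    · rw [if_pos h2, if_pos (by omega)]
      simp only [pS, PowerSeries.coeff_mk, pcount]
      rw [show n/2/2 = n/4 by omega]
    · rw [if_neg h2, if_neg (by omega)]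
  · rw [if_neg h, if_neg (by omega)]

lemma card_PPair_F2 (m : ℕ) :
    ((Nat.card (PPair m) : ℕ) : F2) = PowerSeries.coeff (R := F2) m (pS * pS) := by
  rw [card_PPair, PowerSeries.coeff_mul]
  push_cast
  apply Finset.sum_congr rfl
  intro x _
  simp only [pS, PowerSeries.coeff_mk, pcount]

lemma card_Fib_F2 (M k : ℕ) :
    ((Nat.card (Fib M k) : ℕ) : F2) =
      if tri k ≤ M then PowerSeries.coeff (R := F2) (M - tri k) uS else 0 := by
  by_cases h1 : tri k ≤ M
  · rw [if_pos h1]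
    by_cases h2 : 2 ∣ (M - tri k)
    · rw [Nat.card_congr (fibPPair M k h1 h2), card_PPair_F2, coeff_sq]
      simp only [uS, PowerSeries.coeff_mk]
      by_cases h4 : 2 ∣ ((M - tri k)/2)
      · rw [if_pos h4, if_pos (by omega)]
        simp only [pS, PowerSeries.coeff_mk]
        rw [show (M - tri k)/2/2 = (M - tri k)/4 by omega]
      · rw [if_neg h4, if_neg (by omega)]
    · have : IsEmpty (Fib M k) := ⟨fun w => h2 (fib_elim w).2⟩
      rw [Nat.card_of_isEmpty]
      simp only [uS, PowerSeries.coeff_mk]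
      rw [if_neg (by omega)]
      simp
  · have : IsEmpty (Fib M k) := ⟨fun w => h1 (fib_elim w).1⟩
    rw [Nat.card_of_isEmpty, if_neg h1]
    simp

lemma master_count (M : ℕ) : pcount M = ∑ k ∈ Finset.range (M+1), Nat.card (Fib M k) := by
  rw [pcount, Nat.card_congr (master M), nat_card_sigma]
  exact Fin.sum_univ_eq_sum_range (fun k => Nat.card (Fib M k)) (M+1)

/-- THE key identity : `pS = sS * pS^4` -/
lemma keyR2 : pS = sS * ((pS * pS) * (pS * pS)) := by
  rw [pS_four]
  apply PowerSeries.ext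
  intro M
  rw [PowerSeries.coeff_mul, Finset.Nat.sum_antidiagonal_eq_sum_range_succ_mk]
  have hL : (PowerSeries.coeff (R := F2) M) pS = ∑ k ∈ Finset.range (M+1),
      (if tri k ≤ M then PowerSeries.coeff (R := F2) (M - tri k) uS else 0) := by
    simp only [pS, PowerSeries.coeff_mk]
    rw [master_count]
    push_cast
    apply Finset.sum_congr rfl
    intro k _
    rw [card_Fib_F2]
  have hR : ∑ i ∈ Finset.range (M+1),
      (PowerSeries.coeff (R := F2) i) sS * (PowerSeries.coeff (R := F2) (M - i)) uS
      = ∑ i ∈ (Finset.range (M+1)).filter (fun a => ∃ k, tri k = a),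
        (PowerSeries.coeff (R := F2) (M - i)) uS := by
    rw [Finset.sum_filter]
    apply Finset.sum_congr rfl
    intro i _
    simp only [sS, PowerSeries.coeff_mk]
    rw [ite_mul, one_mul, zero_mul]
  rw [hR, hL, ← Finset.sum_filter]
  apply Finset.sum_bij (fun k _ => tri k)
  · intro k hk
    simp only [Finset.mem_filter, Finset.mem_range] at *
    exact ⟨by omega, k, rfl⟩
  · intro a ha b hb hab
    exact tri_strictMono.injective hab
  · intro a ha
    simp only [Finset.mem_filter, Finset.mem_range] at ha
    obtain ⟨ha1, k, rfl⟩ := ha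
    refine ⟨k, ?_, rfl⟩
    simp only [Finset.mem_filter, Finset.mem_range]
    have := le_tri k
    omega
  · intro k hk; rfl

/-! ### triple convolution type -/

def P3m (a : ℕ) := {u : Multiset ℕ //
  (∀ x ∈ u, 0 < x) ∧ (∀ i, u.count i ≤ 3) ∧ u.sum = a}

def Dbl (c : ℕ) := {v : Multiset ℕ // (∀ x ∈ v, 0 < x) ∧ 2 * v.sum = c}

def QR (m : ℕ) := {v : Multiset ℕ × Multiset ℕ //
  (∀ x ∈ v.1, 0 < x) ∧ (∀ x ∈ v.2, 0 < x) ∧ v.1.sum + 2 * v.2.sum = m}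

def Xt (n : ℕ) := {w : Multiset ℕ × Multiset ℕ × Multiset ℕ //
  ((∀ x ∈ w.1, 0 < x) ∧ (∀ i, w.1.count i ≤ 3)) ∧ ((∀ x ∈ w.2.1, 0 < x) ∧ (∀ x ∈ w.2.2, 0 < x)) ∧
  w.1.sum + (w.2.1.sum + 2 * w.2.2.sum) = n}

def eqP3 (a : ℕ) : P3m a ≃ {p : Nat.Partition a // ∀ i, p.parts.count i ≤ 3} where
  toFun u := ⟨⟨u.1, fun {_} hx => u.2.1 _ hx, u.2.2.2⟩, u.2.2.1⟩
  invFun p := ⟨p.1.parts, fun _ hx => p.1.parts_pos hx, p.2, p.1.parts_sum⟩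
  left_inv u := rfl
  right_inv p := rfl

instance (a : ℕ) : Finite (P3m a) := Finite.of_equiv _ (eqP3 a).symm

lemma card_P3m (a : ℕ) : Nat.card (P3m a) = Tcount a := Nat.card_congr (eqP3 a)

def dblPart (c : ℕ) (h : 2 ∣ c) : Dbl c ≃ Part (c/2) :=
  Equiv.subtypeEquivRight (fun v => by
    constructor
    · rintro ⟨p1, p2⟩; exact ⟨p1, by omega⟩
    · rintro ⟨p1, p2⟩; exact ⟨p1, by omega⟩)

instance (c : ℕ) : Finite (Dbl c) := by
  by_cases h : 2 ∣ c
  · exact Finite.of_equiv _ (dblPart c h).symm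
  · have : IsEmpty (Dbl c) := ⟨fun v => h ⟨v.1.sum, v.2.2.symm⟩⟩
    infer_instance

lemma card_Dbl_F2 (c : ℕ) :
    ((Nat.card (Dbl c) : ℕ) : F2) = PowerSeries.coeff (R := F2) c dS := by
  simp only [dS, PowerSeries.coeff_mk]
  by_cases h : 2 ∣ c
  · rw [if_pos h, Nat.card_congr (dblPart c h), card_Part, pcount]
  · have : IsEmpty (Dbl c) := ⟨fun v => h ⟨v.1.sum, v.2.2.symm⟩⟩
    rw [if_neg h, Nat.card_of_isEmpty]
    simp

/-- fibers of QR -/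
def qrFiber (m : ℕ) (x : ℕ × ℕ) := {w : QR m // w.1.1.sum = x.1 ∧ 2 * w.1.2.sum = x.2}

def qrFiberEquiv (m : ℕ) (x : ℕ × ℕ) (hx : x ∈ antidiagonal m) :
    qrFiber m x ≃ Part x.1 × Dbl x.2 where
  toFun w := (⟨w.1.1.1, w.1.2.1, w.2.1⟩, ⟨w.1.1.2, w.1.2.2.1, w.2.2⟩)
  invFun uv := ⟨⟨(uv.1.1, uv.2.1), uv.1.2.1, uv.2.2.1, by
      rw [uv.1.2.2, uv.2.2.2]
      exact Finset.HasAntidiagonal.mem_antidiagonal.1 hx⟩, uv.1.2.2, uv.2.2.2⟩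
  left_inv w := by apply Subtype.ext; apply Subtype.ext; rfl
  right_inv uv := by
    apply Prod.ext
    · apply Subtype.ext; rfl
    · apply Subtype.ext; rfl

def qrSigma (m : ℕ) : QR m ≃ Σ x : (antidiagonal m : Finset (ℕ × ℕ)), qrFiber m x.1 :=
  (Equiv.sigmaFiberEquiv (fun w : QR m =>
    (⟨(w.1.1.sum, 2 * w.1.2.sum), Finset.HasAntidiagonal.mem_antidiagonal.2 w.2.2.2⟩ :
      (antidiagonal m : Finset (ℕ × ℕ))))).symm.trans
  (Equiv.sigmaCongrRight (fun x => Equiv.subtypeEquivRight (fun w => by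
    constructor
    · intro h
      exact ⟨congrArg (fun y => (Subtype.val y).1) h, congrArg (fun y => (Subtype.val y).2) h⟩
    · intro h
      apply Subtype.ext
      exact Prod.ext h.1 h.2)))

instance (m : ℕ) : Finite (QR m) := by
  have : ∀ x : (antidiagonal m : Finset (ℕ × ℕ)), Finite (qrFiber m x.1) :=
    fun x => Finite.of_equiv _ (qrFiberEquiv m x.1 x.2).symm
  exact Finite.of_equiv _ (qrSigma m).symm

lemma card_QR_F2 (m : ℕ) :
    ((Nat.card (QR m) : ℕ) : F2) = PowerSeries.coeff (R := F2) m (pS * dS) := by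
  have hfin : ∀ x : (antidiagonal m : Finset (ℕ × ℕ)), Finite (qrFiber m x.1) :=
    fun x => Finite.of_equiv _ (qrFiberEquiv m x.1 x.2).symm
  rw [Nat.card_congr (qrSigma m)]
  letI : ∀ x : (antidiagonal m : Finset (ℕ × ℕ)), Fintype (qrFiber m x.1) :=
    fun x => Fintype.ofFinite _
  rw [Nat.card_eq_fintype_card, Fintype.card_sigma, PowerSeries.coeff_mul]
  rw [← Finset.sum_attach (antidiagonal m)
    (fun x => (PowerSeries.coeff (R := F2) x.1) pS * (PowerSeries.coeff (R := F2) x.2) dS)]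
  push_cast
  apply Finset.sum_congr rfl
  intro x _
  rw [← Nat.card_eq_fintype_card, Nat.card_congr (qrFiberEquiv m x.1 x.2),
    Nat.card_prod]
  push_cast
  rw [card_Part, card_Dbl_F2]
  simp only [pS, PowerSeries.coeff_mk, pcount]

/-- fibers of Xt -/
def xtFiber (n : ℕ) (x : ℕ × ℕ) := {w : Xt n // w.1.1.sum = x.1 ∧ w.1.2.1.sum + 2 * w.1.2.2.sum = x.2}

def xtFiberEquiv (n : ℕ) (x : ℕ × ℕ) (hx : x ∈ antidiagonal n) :
    xtFiber n x ≃ P3m x.1 × QR x.2 where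
  toFun w := (⟨w.1.1.1, w.1.2.1.1, w.1.2.1.2, w.2.1⟩,
    ⟨w.1.1.2, w.1.2.2.1.1, w.1.2.2.1.2, w.2.2⟩)
  invFun uv := ⟨⟨(uv.1.1, uv.2.1), ⟨uv.1.2.1, uv.1.2.2.1⟩, ⟨uv.2.2.1, uv.2.2.2.1⟩, by
      rw [uv.1.2.2.2, uv.2.2.2.2]
      exact Finset.HasAntidiagonal.mem_antidiagonal.1 hx⟩, uv.1.2.2.2, uv.2.2.2.2⟩
  left_inv w := by apply Subtype.ext; apply Subtype.ext; rfl
  right_inv uv := by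
    apply Prod.ext
    · apply Subtype.ext; rfl
    · apply Subtype.ext; rfl

def xtSigma (n : ℕ) : Xt n ≃ Σ x : (antidiagonal n : Finset (ℕ × ℕ)), xtFiber n x.1 :=
  (Equiv.sigmaFiberEquiv (fun w : Xt n =>
    (⟨(w.1.1.sum, w.1.2.1.sum + 2 * w.1.2.2.sum), Finset.HasAntidiagonal.mem_antidiagonal.2 w.2.2.2⟩ :
      (antidiagonal n : Finset (ℕ × ℕ))))).symm.trans
  (Equiv.sigmaCongrRight (fun x => Equiv.subtypeEquivRight (fun w => by
    constructor
    · intro h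
      exact ⟨congrArg (fun y => (Subtype.val y).1) h, congrArg (fun y => (Subtype.val y).2) h⟩
    · intro h
      apply Subtype.ext
      exact Prod.ext h.1 h.2)))

instance (n : ℕ) : Finite (Xt n) := by
  have : ∀ x : (antidiagonal n : Finset (ℕ × ℕ)), Finite (xtFiber n x.1) :=
    fun x => Finite.of_equiv _ (xtFiberEquiv n x.1 x.2).symm
  exact Finite.of_equiv _ (xtSigma n).symm

lemma card_Xt_F2 (n : ℕ) :
    ((Nat.card (Xt n) : ℕ) : F2) = PowerSeries.coeff (R := F2) n (tS * (pS * dS)) := by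
  have hfin : ∀ x : (antidiagonal n : Finset (ℕ × ℕ)), Finite (xtFiber n x.1) :=
    fun x => Finite.of_equiv _ (xtFiberEquiv n x.1 x.2).symm
  rw [Nat.card_congr (xtSigma n)]
  letI : ∀ x : (antidiagonal n : Finset (ℕ × ℕ)), Fintype (xtFiber n x.1) :=
    fun x => Fintype.ofFinite _
  rw [Nat.card_eq_fintype_card, Fintype.card_sigma, PowerSeries.coeff_mul]
  rw [← Finset.sum_attach (antidiagonal n)
    (fun x => (PowerSeries.coeff (R := F2) x.1) tS * (PowerSeries.coeff (R := F2) x.2) (pS * dS))]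
  push_cast
  apply Finset.sum_congr rfl
  intro x _
  rw [← Nat.card_eq_fintype_card, Nat.card_congr (xtFiberEquiv n x.1 x.2),
    Nat.card_prod]
  push_cast
  rw [card_P3m, card_QR_F2]
  simp only [tS, PowerSeries.coeff_mk]

/-! ### the toggle involution -/

def setCnt (i c : ℕ) (u : Multiset ℕ) : Multiset ℕ :=
  u.filter (· ≠ i) + Multiset.replicate c i

lemma count_setCnt_self (i c : ℕ) (u : Multiset ℕ) : (setCnt i c u).count i = c := by
  simp only [setCnt, Multiset.count_add, Multiset.count_replicate, if_pos rfl]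
  rw [Multiset.count_filter]
  simp

lemma count_setCnt_ne (i c : ℕ) (u : Multiset ℕ) {x : ℕ} (hx : x ≠ i) :
    (setCnt i c u).count x = u.count x := by
  simp only [setCnt, Multiset.count_add, Multiset.count_replicate]
  rw [Multiset.count_filter, if_pos hx, if_neg (fun h => hx h.symm), add_zero]

lemma mem_setCnt {i c : ℕ} {u : Multiset ℕ} {x : ℕ} (hx : x ∈ setCnt i c u) :
    x ∈ u ∨ x = i := by
  simp only [setCnt, Multiset.mem_add, Multiset.mem_filter] at hx
  rcases hx with h | h
  · exact Or.inl h.1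
  · exact Or.inr (Multiset.eq_of_mem_replicate h)

lemma sum_setCnt (i c : ℕ) (u : Multiset ℕ) :
    (setCnt i c u).sum + i * u.count i = u.sum + i * c := by
  have hsplit : u.filter (· = i) + u.filter (· ≠ i) = u := by
    have := Multiset.filter_add_not (· = i) u
    simpa using this
  have h1 : u.filter (· = i) = Multiset.replicate (u.count i) i := Multiset.filter_eq' u i
  have h2 : u.sum = i * u.count i + (u.filter (· ≠ i)).sum := by
    conv_lhs => rw [← hsplit]
    rw [Multiset.sum_add, h1, Multiset.sum_replicate, smul_eq_mul, mul_comm]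
  simp only [setCnt, Multiset.sum_add, Multiset.sum_replicate, smul_eq_mul]
  have hcomm : c * i = i * c := Nat.mul_comm c i
  omega

lemma setCnt_count (i : ℕ) (u : Multiset ℕ) : setCnt i (u.count i) u = u := by
  apply Multiset.ext.2
  intro x
  by_cases hx : x = i
  · subst hx; rw [count_setCnt_self]
  · rw [count_setCnt_ne _ _ _ hx]

lemma setCnt_setCnt (i c d : ℕ) (u : Multiset ℕ) :
    setCnt i c (setCnt i d u) = setCnt i c u := by
  apply Multiset.ext.2
  intro x
  by_cases hx : x = i
  · subst hx; rw [count_setCnt_self, count_setCnt_self]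
  · rw [count_setCnt_ne _ _ _ hx, count_setCnt_ne _ _ _ hx, count_setCnt_ne _ _ _ hx]

/-- the local toggle rule -/
def rule (m j l : ℕ) : ℕ × ℕ × ℕ :=
  if m = 0 ∧ j = 0 then (2, 0, l - 1)
  else if m = 2 ∧ j = 0 then (0, 0, l + 1)
  else if m % 2 = 0 then (m + 1, j - 1, l)
  else (m - 1, j + 1, l)

lemma rule_sum {m j l : ℕ} (hm : m ≤ 3) (htot : 0 < m + j + l) :
    (rule m j l).1 + (rule m j l).2.1 + 2 * (rule m j l).2.2 = m + j + 2 * l := by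
  unfold rule; split_ifs <;> simp <;> omega

lemma rule_le3 {m j l : ℕ} (hm : m ≤ 3) : (rule m j l).1 ≤ 3 := by
  unfold rule; split_ifs <;> simp <;> omega

lemma rule_pos {m j l : ℕ} (hm : m ≤ 3) (htot : 0 < m + j + l) :
    0 < (rule m j l).1 + (rule m j l).2.1 + (rule m j l).2.2 := by
  unfold rule; split_ifs <;> simp <;> omega

lemma rule_invol {m j l : ℕ} (hm : m ≤ 3) (htot : 0 < m + j + l) :
    rule (rule m j l).1 (rule m j l).2.1 (rule m j l).2.2 = (m, j, l) := by
  unfold rule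
  split_ifs with h1 h2 h3 <;>
    first
      | (simp_all [Prod.ext_iff]; try omega)
      | omega

lemma rule_ne {m j l : ℕ} (hm : m ≤ 3) (htot : 0 < m + j + l) :
    rule m j l ≠ (m, j, l) := by
  unfold rule
  split_ifs with h1 h2 h3 <;> simp <;> intro he <;> omega

/-! ### the toggle map on Xt -/

def zmul (w : Xt n) : Multiset ℕ := w.1.1 + w.1.2.1 + w.1.2.2

lemma zmul_ne_zero {n : ℕ} (hn : n ≠ 0) (w : Xt n) : zmul w ≠ 0 := by
  intro h
  have hc := congrArg Multiset.card h
  simp only [zmul, Multiset.card_add, Multiset.card_zero] at hc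
  have h1 : w.1.1 = 0 := Multiset.card_eq_zero.1 (by omega)
  have h2 : w.1.2.1 = 0 := Multiset.card_eq_zero.1 (by omega)
  have h3 : w.1.2.2 = 0 := Multiset.card_eq_zero.1 (by omega)
  have := w.2.2.2
  rw [h1, h2, h3] at this
  simp at this
  omega

def iof {n : ℕ} (hn : n ≠ 0) (w : Xt n) : ℕ :=
  (zmul w).toFinset.min' (by
    rw [Multiset.toFinset_nonempty]
    exact zmul_ne_zero hn w)

lemma iof_mem {n : ℕ} (hn : n ≠ 0) (w : Xt n) : iof hn w ∈ zmul w := by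
  have := (zmul w).toFinset.min'_mem (by
    rw [Multiset.toFinset_nonempty]; exact zmul_ne_zero hn w)
  rwa [Multiset.mem_toFinset] at this

lemma iof_min {n : ℕ} (hn : n ≠ 0) (w : Xt n) {x : ℕ} (hx : x ∈ zmul w) : iof hn w ≤ x :=
  (zmul w).toFinset.min'_le x (Multiset.mem_toFinset.2 hx)

lemma iof_pos {n : ℕ} (hn : n ≠ 0) (w : Xt n) : 0 < iof hn w := by
  have hmem := iof_mem hn w
  simp only [zmul, Multiset.mem_add] at hmem
  rcases hmem with (h | h) | h
  · exact w.2.1.1 _ h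
  · exact w.2.2.1.1 _ h
  · exact w.2.2.1.2 _ h

def tog {n : ℕ} (hn : n ≠ 0) (w : Xt n) : Xt n := by
  refine ⟨(setCnt (iof hn w) (rule (w.1.1.count (iof hn w)) (w.1.2.1.count (iof hn w))
      (w.1.2.2.count (iof hn w))).1 w.1.1,
    setCnt (iof hn w) (rule (w.1.1.count (iof hn w)) (w.1.2.1.count (iof hn w))
      (w.1.2.2.count (iof hn w))).2.1 w.1.2.1,
    setCnt (iof hn w) (rule (w.1.1.count (iof hn w)) (w.1.2.1.count (iof hn w))
      (w.1.2.2.count (iof hn w))).2.2 w.1.2.2), ?_, ?_, ?_⟩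
  · set i := iof hn w
    constructor
    · intro x hx
      rcases mem_setCnt hx with h | h
      · exact w.2.1.1 _ h
      · rw [h]; exact iof_pos hn w
    · intro x
      by_cases hx : x = i
      · subst hx
        rw [count_setCnt_self]
        exact rule_le3 (w.2.1.2 i)
      · rw [count_setCnt_ne _ _ _ hx]
        exact w.2.1.2 x
  · constructor
    · intro x hx
      rcases mem_setCnt hx with h | h
      · exact w.2.2.1.1 _ h
      · rw [h]; exact iof_pos hn w
    · intro x hx
      rcases mem_setCnt hx with h | h
      · exact w.2.2.1.2 _ h
      · rw [h]; exact iof_pos hn w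
  · -- sum condition
    set i := iof hn w with hidef
    set m := w.1.1.count i with hm
    set j := w.1.2.1.count i with hj
    set l := w.1.2.2.count i with hl
    have hmle : m ≤ 3 := w.2.1.2 i
    have htot : 0 < m + j + l := by
      have hmem := iof_mem hn w
      simp only [zmul] at hmem
      rw [← Multiset.count_pos, Multiset.count_add, Multiset.count_add] at hmem
      rw [← hidef] at hmem
      omega
    have hs1 := sum_setCnt i (rule m j l).1 w.1.1
    have hs2 := sum_setCnt i (rule m j l).2.1 w.1.2.1
    have hs3 := sum_setCnt i (rule m j l).2.2 w.1.2.2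
    rw [← hm] at hs1
    rw [← hj] at hs2
    rw [← hl] at hs3
    have hr := rule_sum hmle htot
    have hmul : i * (rule m j l).1 + i * (rule m j l).2.1 + 2 * (i * (rule m j l).2.2)
        = i * m + i * j + 2 * (i * l) := by
      have h2 : i * ((rule m j l).1 + (rule m j l).2.1 + 2 * (rule m j l).2.2)
          = i * (m + j + 2 * l) := by rw [hr]
      ring_nf at h2 ⊢
      omega
    have hw := w.2.2.2
    show (setCnt i (rule m j l).1 w.1.1).sum + ((setCnt i (rule m j l).2.1 w.1.2.1).sum
      + 2 * (setCnt i (rule m j l).2.2 w.1.2.2).sum) = n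
    omega

/-! ### tog is a fixed-point-free involution -/

lemma tog_fst {n : ℕ} (hn : n ≠ 0) (w : Xt n) :
    (tog hn w).1.1 = setCnt (iof hn w) (rule (w.1.1.count (iof hn w))
      (w.1.2.1.count (iof hn w)) (w.1.2.2.count (iof hn w))).1 w.1.1 := rfl

lemma tog_snd {n : ℕ} (hn : n ≠ 0) (w : Xt n) :
    (tog hn w).1.2.1 = setCnt (iof hn w) (rule (w.1.1.count (iof hn w))
      (w.1.2.1.count (iof hn w)) (w.1.2.2.count (iof hn w))).2.1 w.1.2.1 := rfl

lemma tog_thd {n : ℕ} (hn : n ≠ 0) (w : Xt n) :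
    (tog hn w).1.2.2 = setCnt (iof hn w) (rule (w.1.1.count (iof hn w))
      (w.1.2.1.count (iof hn w)) (w.1.2.2.count (iof hn w))).2.2 w.1.2.2 := rfl

lemma tot_pos {n : ℕ} (hn : n ≠ 0) (w : Xt n) :
    0 < w.1.1.count (iof hn w) + w.1.2.1.count (iof hn w) + w.1.2.2.count (iof hn w) := by
  have hmem := iof_mem hn w
  simp only [zmul] at hmem
  rw [← Multiset.count_pos, Multiset.count_add, Multiset.count_add] at hmem
  omega

lemma iof_tog {n : ℕ} (hn : n ≠ 0) (w : Xt n) : iof hn (tog hn w) = iof hn w := by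
  have hmle : w.1.1.count (iof hn w) ≤ 3 := w.2.1.2 _
  have htot := tot_pos hn w
  apply le_antisymm
  · apply iof_min
    rw [← Multiset.count_pos]
    simp only [zmul, Multiset.count_add, tog_fst, tog_snd, tog_thd, count_setCnt_self]
    have := rule_pos hmle htot
    omega
  · have hmem := iof_mem hn (tog hn w)
    simp only [zmul, Multiset.mem_add, tog_fst, tog_snd, tog_thd] at hmem
    have hcase : iof hn (tog hn w) ∈ zmul w ∨ iof hn (tog hn w) = iof hn w := by
      rcases hmem with (h | h) | h
      · rcases mem_setCnt h with h' | h'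
        · exact Or.inl (by simp only [zmul, Multiset.mem_add]; exact Or.inl (Or.inl h'))
        · exact Or.inr h'
      · rcases mem_setCnt h with h' | h'
        · exact Or.inl (by simp only [zmul, Multiset.mem_add]; exact Or.inl (Or.inr h'))
        · exact Or.inr h'
      · rcases mem_setCnt h with h' | h'
        · exact Or.inl (by simp only [zmul, Multiset.mem_add]; exact Or.inr h')
        · exact Or.inr h'
    rcases hcase with h | h
    · exact iof_min hn w h
    · omega

lemma tog_tog {n : ℕ} (hn : n ≠ 0) (w : Xt n) : tog hn (tog hn w) = w := by
  have hmle : w.1.1.count (iof hn w) ≤ 3 := w.2.1.2 _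
  have htot := tot_pos hn w
  have hinv := rule_invol hmle htot
  apply Subtype.ext
  have hi := iof_tog hn w
  have hc1 : (tog hn w).1.1.count (iof hn w) = (rule (w.1.1.count (iof hn w))
      (w.1.2.1.count (iof hn w)) (w.1.2.2.count (iof hn w))).1 := by
    rw [tog_fst, count_setCnt_self]
  have hc2 : (tog hn w).1.2.1.count (iof hn w) = (rule (w.1.1.count (iof hn w))
      (w.1.2.1.count (iof hn w)) (w.1.2.2.count (iof hn w))).2.1 := by
    rw [tog_snd, count_setCnt_self]
  have hc3 : (tog hn w).1.2.2.count (iof hn w) = (rule (w.1.1.count (iof hn w))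
      (w.1.2.1.count (iof hn w)) (w.1.2.2.count (iof hn w))).2.2 := by
    rw [tog_thd, count_setCnt_self]
  have key : ∀ c : ℕ × ℕ × ℕ, c = (rule (w.1.1.count (iof hn w))
      (w.1.2.1.count (iof hn w)) (w.1.2.2.count (iof hn w))) →
      rule c.1 c.2.1 c.2.2 = (w.1.1.count (iof hn w), w.1.2.1.count (iof hn w),
        w.1.2.2.count (iof hn w)) := by
    intro c hc; rw [hc]; exact hinv
  have hrule := key _ rfl
  refine Prod.ext ?_ (Prod.ext ?_ ?_)
  · rw [tog_fst hn (tog hn w), hi, hc1, hc2, hc3, hrule]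
    rw [tog_fst, setCnt_setCnt, setCnt_count]
  · rw [tog_snd hn (tog hn w), hi, hc1, hc2, hc3, hrule]
    rw [tog_snd, setCnt_setCnt, setCnt_count]
  · rw [tog_thd hn (tog hn w), hi, hc1, hc2, hc3, hrule]
    rw [tog_thd, setCnt_setCnt, setCnt_count]

lemma tog_ne {n : ℕ} (hn : n ≠ 0) (w : Xt n) : tog hn w ≠ w := by
  have hmle : w.1.1.count (iof hn w) ≤ 3 := w.2.1.2 _
  have htot := tot_pos hn w
  have hne := rule_ne hmle htot
  intro h
  apply hne
  have h1 := congrArg (fun v : Xt n => v.1.1.count (iof hn w)) h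
  have h2 := congrArg (fun v : Xt n => v.1.2.1.count (iof hn w)) h
  have h3 := congrArg (fun v : Xt n => v.1.2.2.count (iof hn w)) h
  simp only [tog_fst, tog_snd, tog_thd, count_setCnt_self] at h1 h2 h3
  exact Prod.ext h1 (Prod.ext h2 h3)

lemma card_Xt_zero : ((Nat.card (Xt 0) : ℕ) : F2) = 1 := by
  have : ∀ w : Xt 0, w = ⟨(0, 0, 0), by simp, by simp, by simp⟩ := by
    intro w
    have hsum := w.2.2.2
    have h1 : w.1.1 = 0 := by
      by_contra h
      obtain ⟨x, hx⟩ := Multiset.exists_mem_of_ne_zero h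
      have := w.2.1.1 x hx
      have := Multiset.single_le_sum (fun y _ => Nat.zero_le y) x hx
      omega
    have h2 : w.1.2.1 = 0 := by
      by_contra h
      obtain ⟨x, hx⟩ := Multiset.exists_mem_of_ne_zero h
      have := w.2.2.1.1 x hx
      have := Multiset.single_le_sum (fun y _ => Nat.zero_le y) x hx
      omega
    have h3 : w.1.2.2 = 0 := by
      by_contra h
      obtain ⟨x, hx⟩ := Multiset.exists_mem_of_ne_zero h
      have := w.2.2.1.2 x hx
      have := Multiset.single_le_sum (fun y _ => Nat.zero_le y) x hx
      omega
    apply Subtype.ext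
    rw [show w.1 = (w.1.1, w.1.2.1, w.1.2.2) from rfl, h1, h2, h3]
  haveI : Unique (Xt 0) := ⟨⟨⟨(0, 0, 0), by simp, by simp, by simp⟩⟩, this⟩
  rw [Nat.card_unique]
  simp

lemma card_Xt_pos {n : ℕ} (hn : n ≠ 0) : ((Nat.card (Xt n) : ℕ) : F2) = 0 := by
  letI : Fintype (Xt n) := Fintype.ofFinite _
  rw [Nat.card_eq_fintype_card, ← Finset.card_univ, Finset.card_eq_sum_ones]
  push_cast
  apply Finset.sum_involution (fun a _ => tog hn a)
  · intro a _
    decide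
  · intro a _ _
    exact tog_ne hn a
  · intro a _
    exact Finset.mem_univ _
  · intro a _
    exact tog_tog hn a

/-- the first key series identity -/
lemma keyR1 : tS * (pS * dS) = 1 := by
  apply PowerSeries.ext
  intro n
  rw [← card_Xt_F2, PowerSeries.coeff_one]
  by_cases hn : n = 0
  · subst hn
    rw [card_Xt_zero, if_pos rfl]
  · rw [card_Xt_pos hn, if_neg hn]

/-! ### final algebra -/

lemma pcount_zero : pcount 0 = 1 := by
  rw [pcount, Nat.card_unique]

lemma pS_ne_zero : pS ≠ 0 := by
  intro h
  have h0 := congrArg (PowerSeries.coeff (R := F2) 0) h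
  simp only [pS, PowerSeries.coeff_mk, pcount_zero, map_zero] at h0
  exact one_ne_zero (by exact_mod_cast h0)

lemma tS_eq_sS : tS = sS := by
  have h1 : tS * (pS * (pS * pS)) = 1 := by
    have := keyR1
    rwa [← pS_sq] at this
  have h2 : sS * (pS * (pS * pS)) = 1 := by
    have hk := keyR2
    have hstep : sS * (pS * (pS * pS)) * pS = 1 * pS := by
      rw [one_mul]
      calc sS * (pS * (pS * pS)) * pS = sS * ((pS * pS) * (pS * pS)) := by ring
        _ = pS := hk.symm
    exact mul_right_cancel₀ pS_ne_zero hstep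
  have hu : pS * (pS * pS) ≠ 0 := by
    intro h
    rw [h, mul_zero] at h2
    exact zero_ne_one h2
  have := h1.trans h2.symm
  exact mul_right_cancel₀ hu this

lemma Tcount_parity (n : ℕ) :
    ((Tcount n : ℕ) : F2) = if ∃ k, tri k = n then 1 else 0 := by
  have h := congrArg (PowerSeries.coeff (R := F2) n) tS_eq_sS
  simpa only [tS, sS, PowerSeries.coeff_mk] using h

lemma cast_eq_one_iff (a : ℕ) : ((a : F2) = 1) ↔ a % 2 = 1 := by
  have hmod : ((a % 2 : ℕ) : F2) = (a : F2) := ZMod.natCast_mod a 2 ▸ rfl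
  have h2 : a % 2 = 0 ∨ a % 2 = 1 := by omega
  constructor
  · intro h
    rcases h2 with h0 | h1
    · rw [← hmod, h0] at h
      simp at h
    · exact h1
  · intro h1
    rw [← hmod, h1]
    rfl

end TOddAux

/-- The number of partitions of `n` in which each part appears at most 3 times. -/
noncomputable def T (n : ℕ) : ℕ :=
  Nat.card {p : Nat.Partition n // ∀ i, p.parts.count i ≤ 3}

theorem T_odd_iff_triangular (n : ℕ) :
    Odd (T n) ↔ ∃ k : ℕ, n = k * (k + 1) / 2 := by
  have hT : T n = TOddAux.Tcount n := rfl
  rw [Nat.odd_iff, hT, ← TOddAux.cast_eq_one_iff]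
  rw [TOddAux.Tcount_parity n]
  constructor
  · intro h
    by_cases he : ∃ k, TOddAux.tri k = n
    · obtain ⟨k, hk⟩ := he
      exact ⟨k, hk.symm⟩
    · rw [if_neg he] at h
      exact absurd h (by decide)
  · rintro ⟨k, rfl⟩
    rw [if_pos ⟨k, rfl⟩]
end
end

section
/- Define f(ℓ) = ⌈ℓ/2⌉ on positive integers, and f^0(ℓ) = ℓ, f^{k}(ℓ) = f(f^{k-1}(ℓ)). For a positive integer m with binary expansion a_r…a_2a_1, and α ≥ 1, define γ(m,α) as follows: consider the rightmost α binary digits a_α…a_1 (with a_i = 0 for i > r); if all are 0, set γ(m,α) = 0; otherwise, letting i' be the index of the rightmost digit equal to 1, set γ(m,α) = 1 + #{i : i' < i ≤ α, a_i = 0}. Then γ(m,α) equals the number of odd integers among m, f(m), f^2(m), …, f^{α−1}(m). -/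
/-- `f ℓ = ⌈ℓ/2⌉`. -/
def f (ℓ : ℕ) : ℕ := (ℓ + 1) / 2

/-- `γ(m,α)` from the paper: among the bottom `α` binary digits `a_α … a_1` of `m`
(with `a_i = m.testBit (i-1)`), if all are zero then `0`; otherwise `1` plus the number
of zero digits strictly above the rightmost `1` (whose 1-indexed position is
`m.factorization 2 + 1`). -/
def gamma (m α : ℕ) : ℕ :=
  if m % 2 ^ α = 0 then 0
  else 1 + ((Finset.Icc 1 α).filter
      (fun i => m.factorization 2 + 1 < i ∧ m.testBit (i - 1) = false)).card

lemma iter_f (m k : ℕ) (hm : 1 ≤ m) : f^[k] m = (m - 1) / 2 ^ k + 1 := by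
  induction k with
  | zero => simp; omega
  | succ k ih =>
    rw [Function.iterate_succ_apply', ih, f, pow_succ, ← Nat.div_div_eq_div_mul]
    generalize (m - 1) / 2 ^ k = q
    omega

lemma sub_one_div_pow (t k : ℕ) (ht : 1 ≤ t) : (2 ^ k * t - 1) / 2 ^ k = t - 1 := by
  obtain ⟨s, rfl⟩ : ∃ s, t = s + 1 := ⟨t - 1, by omega⟩
  have hp : 0 < 2 ^ k := Nat.pow_pos two_pos
  have h1 : 2 ^ k * (s + 1) - 1 = (2 ^ k - 1) + s * 2 ^ k := by
    rw [Nat.mul_add, Nat.mul_one, Nat.mul_comm]; omega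
  rw [h1, Nat.add_mul_div_right _ _ hp, Nat.div_eq_of_lt (by omega)]
  omega

lemma bit_lt (v u k : ℕ) (hu : u % 2 = 1) (hk : k < v) :
    (2 ^ v * u - 1) / 2 ^ k % 2 = 1 := by
  have h : 2 ^ v * u = 2 ^ k * (2 ^ (v - k) * u) := by
    rw [← mul_assoc, ← pow_add, Nat.add_sub_cancel' (le_of_lt hk)]
  have hu1 : 1 ≤ u := by omega
  have hpos : 1 ≤ 2 ^ (v - k) * u :=
    Nat.mul_pos (Nat.pow_pos two_pos) (by omega)
  rw [h, sub_one_div_pow _ _ hpos]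
  obtain ⟨w, hw⟩ : ∃ w, v - k = w + 1 := ⟨v - k - 1, by omega⟩
  have h2 : 2 ^ (v - k) * u = 2 * (2 ^ w * u) := by rw [hw, pow_succ]; ring
  have hpos2 : 1 ≤ 2 ^ w * u :=
    Nat.mul_pos (Nat.pow_pos two_pos) (by omega)
  omega

lemma bit_eq (v u : ℕ) (hu : u % 2 = 1) : (2 ^ v * u - 1) / 2 ^ v % 2 = 0 := by
  rw [sub_one_div_pow _ _ (by omega)]; omega

lemma bit_gt (v u k : ℕ) (hu : u % 2 = 1) (hk : v < k) :
    (2 ^ v * u - 1) / 2 ^ k = (2 ^ v * u) / 2 ^ k := by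
  have hbase : (2 ^ v * u - 1) / 2 ^ (v + 1) = (2 ^ v * u) / 2 ^ (v + 1) := by
    obtain ⟨s, hs⟩ : ∃ s, u = 2 * s + 1 := ⟨u / 2, by omega⟩
    have hp : 0 < 2 ^ v := Nat.pow_pos two_pos
    have h4 : 0 < 2 ^ (v + 1) := Nat.pow_pos two_pos
    have h1 : 2 ^ v * u = 2 ^ v + s * 2 ^ (v + 1) := by rw [hs, pow_succ]; ring
    rw [h1, show 2 ^ v + s * 2 ^ (v + 1) - 1 = (2 ^ v - 1) + s * 2 ^ (v + 1) from by omega,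
      Nat.add_mul_div_right _ _ h4, Nat.add_mul_div_right _ _ h4,
      Nat.div_eq_of_lt (by omega), Nat.div_eq_of_lt (by omega)]
  have h5 : 2 ^ k = 2 ^ (v + 1) * 2 ^ (k - v - 1) := by
    rw [← pow_add]; congr 1; omega
  rw [h5, ← Nat.div_div_eq_div_mul, ← Nat.div_div_eq_div_mul, hbase]

theorem gamma_eq_card_odd_iterates (m α : ℕ) (hm : 1 ≤ m) (hα : 1 ≤ α) :
    gamma m α = ((Finset.range α).filter (fun k => Odd (f^[k] m))).card := by
  set v := m.factorization 2 with hv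
  have hm0 : m ≠ 0 := by omega
  have hdvd : 2 ^ v ∣ m := Nat.ordProj_dvd m 2
  have hnd : ¬ 2 ^ (v + 1) ∣ m := Nat.pow_succ_factorization_not_dvd hm0 Nat.prime_two
  set u := m / 2 ^ v with hu_def
  have hmu : m = 2 ^ v * u := (Nat.mul_div_cancel' hdvd).symm
  have hu : u % 2 = 1 := by
    rcases Nat.even_or_odd u with he | ho
    · exfalso; apply hnd; obtain ⟨t, ht⟩ := he
      exact ⟨t, by rw [hmu, ht, pow_succ]; ring⟩
    · rw [Nat.odd_iff] at ho; exact ho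
  have hfilter : (Finset.range α).filter (fun k => Odd (f^[k] m))
      = (Finset.range α).filter (fun k => (m - 1) / 2 ^ k % 2 = 0) := by
    apply Finset.filter_congr
    intro k _
    rw [iter_f m k hm, Nat.odd_iff]
    generalize (m - 1) / 2 ^ k = q
    omega
  rw [hfilter]
  have hdvd_iff : m % 2 ^ α = 0 ↔ α ≤ v := by
    rw [← Nat.dvd_iff_mod_eq_zero]
    exact Nat.Prime.pow_dvd_iff_le_factorization Nat.prime_two hm0
  by_cases hcase : α ≤ v
  · rw [gamma, if_pos (hdvd_iff.mpr hcase)]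
    symm
    rw [Finset.card_eq_zero, Finset.filter_eq_empty_iff]
    intro k hk
    simp only [Finset.mem_range] at hk
    have hb := bit_lt v u k hu (by omega)
    rw [hmu]
    omega
  · push_neg at hcase
    rw [gamma, if_neg (by rw [hdvd_iff]; omega), ← hv]
    have hset : (Finset.range α).filter (fun k => (m - 1) / 2 ^ k % 2 = 0)
        = insert v ((Finset.range α).filter (fun k => v < k ∧ m / 2 ^ k % 2 = 0)) := by
      ext k
      simp only [Finset.mem_insert, Finset.mem_filter, Finset.mem_range]
      constructor
      · rintro ⟨hk, hbit⟩
        rcases lt_trichotomy k v with h | h | h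
        · exfalso
          have hb := bit_lt v u k hu h
          rw [hmu] at hbit; omega
        · exact Or.inl h
        · refine Or.inr ⟨hk, h, ?_⟩
          have hb := bit_gt v u k hu h
          rw [hmu] at hbit ⊢; omega
      · rintro (rfl | ⟨hk, hvk, hbit⟩)
        · refine ⟨hcase, ?_⟩
          rw [hmu]; exact bit_eq v u hu
        · refine ⟨hk, ?_⟩
          have hb := bit_gt v u k hu hvk
          rw [hmu] at hbit ⊢; omega
    rw [hset, Finset.card_insert_of_notMem (fun h => by
      simp only [Finset.mem_filter, Finset.mem_range] at h; omega)]
    have hcard : ((Finset.Icc 1 α).filter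
          (fun i => v + 1 < i ∧ m.testBit (i - 1) = false)).card
        = ((Finset.range α).filter (fun k => v < k ∧ m / 2 ^ k % 2 = 0)).card := by
      apply Finset.card_bij (fun i _ => i - 1)
      · intro i hi
        simp only [Finset.mem_filter, Finset.mem_Icc] at hi
        obtain ⟨⟨h1, h2⟩, h3, h4⟩ := hi
        simp only [Finset.mem_filter, Finset.mem_range]
        refine ⟨by omega, by omega, ?_⟩
        rw [Nat.testBit_eq_decide_div_mod_eq, decide_eq_false_iff_not] at h4
        omega
      · intro a ha b hb hab
        simp only [Finset.mem_filter, Finset.mem_Icc] at ha hb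
        omega
      · intro k hk
        simp only [Finset.mem_filter, Finset.mem_range] at hk
        refine ⟨k + 1, ?_, by omega⟩
        simp only [Finset.mem_filter, Finset.mem_Icc]
        refine ⟨⟨by omega, by omega⟩, by omega, ?_⟩
        rw [Nat.testBit_eq_decide_div_mod_eq, decide_eq_false_iff_not]
        simp only [Nat.add_sub_cancel]
        omega
    omega
end

section
/- Define sequences of polynomials in ℤ[x] by S₁ = 2¹⁶(3x + 2⁸x²), S₂ = 2²⁴(2x + 2⁸·3²x² + 2¹⁷x³ + 2²⁴x⁴), and S_m = g₁S_{m−1} − g₂S_{m−2} for m ≥ 3, where g₁ = 2¹⁶(3x + 2⁸x²) and g₂ = −2²⁴x. Then for every m ≥ 1, S_m = 2^{8(m+1)}·r_m for some polynomial r_m = ∑_{n≥1} d(n)xⁿ with integer coefficients satisfying ν₂(d(n)) ≥ 8(n−1) for all n ≥ 2. -/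
open Polynomial

noncomputable def g1 : Polynomial ℤ := 2 ^ 16 * (3 * X + 2 ^ 8 * X ^ 2)

noncomputable def g2 : Polynomial ℤ := -(2 ^ 24) * X

noncomputable def S : ℕ → Polynomial ℤ
  | 0 => 0
  | 1 => 2 ^ 16 * (3 * X + 2 ^ 8 * X ^ 2)
  | 2 => 2 ^ 24 * (2 * X + 2 ^ 8 * 3 ^ 2 * X ^ 2 + 2 ^ 17 * X ^ 3 + 2 ^ 24 * X ^ 4)
  | (m + 3) => g1 * S (m + 2) - g2 * S (m + 1)

def Good (m : ℕ) : Prop :=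
  ∃ r : Polynomial ℤ, S m = 2 ^ (8 * (m + 1)) * r ∧ r.coeff 0 = 0 ∧
    ∀ n : ℕ, 2 ≤ n → (2 : ℤ) ^ (8 * (n - 1)) ∣ r.coeff n

theorem good1 : Good 1 := by
  refine ⟨C 3 * X + C (2 ^ 8) * X ^ 2,
    by simp only [S, map_pow, map_ofNat], by simp, ?_⟩
  intro n hn
  match n, hn with
  | 2, _ => simp [coeff_C_mul, coeff_X, coeff_X_pow]
  | (k+3), _ => simp [coeff_C_mul, coeff_X, coeff_X_pow]

theorem good2 : Good 2 := by
  refine ⟨C 2 * X + C (2 ^ 8 * 3 ^ 2) * X ^ 2 + C (2 ^ 17) * X ^ 3 + C (2 ^ 24) * X ^ 4,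
    by simp only [S, map_mul, map_pow, map_ofNat], by simp, ?_⟩
  intro n hn
  match n, hn with
  | 2, _ => simp [coeff_C_mul, coeff_X, coeff_X_pow]
  | 3, _ => simp [coeff_C_mul, coeff_X, coeff_X_pow]
  | 4, _ => simp [coeff_C_mul, coeff_X, coeff_X_pow]
  | (k+5), _ => simp [coeff_C_mul, coeff_X, coeff_X_pow]

theorem good_step (m : ℕ) (h1 : Good (m + 1)) (h2 : Good (m + 2)) : Good (m + 3) := by
  obtain ⟨r1, hS1, hc1, hd1⟩ := h1
  obtain ⟨r2, hS2, hc2, hd2⟩ := h2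
  refine ⟨C (2 ^ 8) * (X * (C 3 * r2 + C (2 ^ 8) * (X * r2) + r1)), ?_, by simp, ?_⟩
  · show g1 * S (m + 2) - g2 * S (m + 1) = _
    rw [hS1, hS2, g1, g2]
    simp only [map_pow, map_ofNat]
    rw [show 8 * (m + 2 + 1) = 8 * m + 24 from by ring,
        show 8 * (m + 1 + 1) = 8 * m + 16 from by ring,
        show 8 * (m + 3 + 1) = 8 * m + 32 from by ring]
    ring
  · intro n hn
    match n, hn with
    | (k+2), _ =>
      rw [coeff_C_mul, coeff_X_mul]
      simp only [coeff_add, coeff_C_mul, coeff_X_mul]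
      have ha : (2 : ℤ) ^ (8 * k) ∣ r2.coeff (k + 1) := by
        match k with
        | 0 => simp
        | (j+1) => simpa using hd2 (j + 2) (by omega)
      have hb : (2 : ℤ) ^ (8 * k) ∣ r1.coeff (k + 1) := by
        match k with
        | 0 => simp
        | (j+1) => simpa using hd1 (j + 2) (by omega)
      obtain ⟨a, ha⟩ := ha
      obtain ⟨b, hb⟩ := hb
      obtain ⟨c, hc⟩ : ∃ c : ℤ, 2 ^ 8 * r2.coeff k = 2 ^ (8 * k) * c := by
        match k with
        | 0 => exact ⟨0, by simp [hc2]⟩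
        | 1 => exact ⟨r2.coeff 1, by ring⟩
        | (j+2) =>
          obtain ⟨w, hw⟩ := hd2 (j + 2) (by omega)
          rw [show j + 2 - 1 = j + 1 from rfl] at hw
          exact ⟨w, by rw [hw]; ring⟩
      refine ⟨3 * a + c + b, ?_⟩
      rw [ha, hb, show 8 * (k + 2 - 1) = 8 * k + 8 from by omega]
      rw [show (2:ℤ) ^ 8 * (3 * (2 ^ (8 * k) * a) + 2 ^ 8 * r2.coeff k + 2 ^ (8 * k) * b)
          = 2 ^ (8 * k) * (2 ^ 8 * (3 * a + b)) + 2 ^ 8 * (2 ^ 8 * r2.coeff k) from by ring,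
        hc]
      ring

theorem good_aux : ∀ m : ℕ, Good (m + 1) ∧ Good (m + 2) := by
  intro m
  induction m with
  | zero => exact ⟨good1, good2⟩
  | succ k ih => exact ⟨ih.2, good_step k ih.1 ih.2⟩

theorem S_eq_two_pow_mul (m : ℕ) (hm : 1 ≤ m) :
    ∃ r : Polynomial ℤ, S m = 2 ^ (8 * (m + 1)) * r ∧ r.coeff 0 = 0 ∧
      ∀ n : ℕ, 2 ≤ n → (2 : ℤ) ^ (8 * (n - 1)) ∣ r.coeff n := by
  obtain ⟨k, rfl⟩ := Nat.exists_eq_add_of_le hm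
  have := (good_aux k).1
  rwa [show k + 1 = 1 + k from by ring] at this
end

section
/- Let a(n) be the coefficients of the formal power series q·∏_{n=1}^∞ (1+q^n)^{24} = ∑_{n≥1} a(n)q^n. Then a(n) is odd if and only if n is an odd perfect square. -/
open PowerSeries Finset

/-- The `n`th coefficient of `q·∏_{k≥1}(1+q^k)^{24}` (the coefficient of `q^n` only
depends on the factors with `k ≤ n`). -/
noncomputable def a (n : ℕ) : ℤ :=
  PowerSeries.coeff n
    (PowerSeries.X * ∏ k ∈ Finset.Icc 1 n, (1 + (PowerSeries.X : PowerSeries ℤ) ^ k) ^ 24)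

abbrev A2 := PowerSeries (ZMod 2)

lemma two_eq_zero : (2 : A2) = 0 := by
  calc (2 : A2) = PowerSeries.C 2 := (map_ofNat _ 2).symm
  _ = PowerSeries.C 0 := by rw [show (2 : ZMod 2) = 0 by decide]
  _ = 0 := map_zero _

/-- Gaussian binomial `[n, k]` in base `X^4`, over `ZMod 2`. -/
noncomputable def gb : ℕ → ℕ → A2
  | _, 0 => 1
  | 0, _+1 => 0
  | n+1, k+1 => gb n (k+1) + X^(4*(n-k)) * gb n k

lemma gb_zero (n : ℕ) : gb n 0 = 1 := by cases n <;> rfl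

lemma gb_succ (n k : ℕ) : gb (n+1) (k+1) = gb n (k+1) + X^(4*(n-k)) * gb n k := rfl

lemma gb_eq_zero {n k : ℕ} (h : n < k) : gb n k = 0 := by
  induction n generalizing k with
  | zero => cases k with
    | zero => omega
    | succ k => rfl
  | succ n ih =>
    cases k with
    | zero => omega
    | succ k =>
      rw [gb_succ, ih (by omega), ih (by omega)]
      ring

lemma gb_absorb (n k : ℕ) :
    (1 + X^(4*(k+1))) * gb n (k+1) = (1 + X^(4*(n-k))) * gb n k := by
  induction n generalizing k with
  | zero =>
    cases k with
    | zero =>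
      simp only [gb_eq_zero (by omega : (0:ℕ) < 1), gb_zero, Nat.zero_sub, mul_zero,
        Nat.mul_zero, pow_zero, mul_one]
      linear_combination -two_eq_zero
    | succ k =>
      rw [gb_eq_zero (by omega), gb_eq_zero (by omega)]
      ring
  | succ n ih =>
    rcases le_or_gt k n with hk | hk
    · -- main case k ≤ n
      obtain ⟨a, ha⟩ : ∃ a, n - k = a ∧ n = a + k := ⟨n - k, rfl, by omega⟩
      obtain ⟨ha1, ha2⟩ := ha
      cases k with
      | zero =>
        rw [gb_succ n 0, gb_zero, show n + 1 - 0 = n + 1 by omega, gb_zero,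
          Nat.sub_zero]
        have habs := ih 0
        rw [gb_zero, Nat.sub_zero] at habs
        linear_combination habs + X^(4*n) * two_eq_zero
      | succ k =>
        rw [gb_succ n (k+1), gb_succ n k,
          show n + 1 - (k+1) = n - k by omega]
        have IH1 := ih (k+1)
        have IH2 := ih k
        obtain ⟨a, hb1, hb2⟩ : ∃ a, n - (k+1) = a ∧ n - k = a + 1 := ⟨n - (k+1), rfl, by omega⟩
        rw [hb1] at IH1 ⊢
        rw [hb2] at IH2 ⊢
        linear_combination IH1 - X^(4*(a+1)) * IH2
          + ((X^(4*a) - X^(4*(a+1))) * gb n (k+1)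
            + X^4 * X^(a*4) * gb n (k+1) - X^4 * X^(a*4) * gb n k
            + X^8 * X^(k*4) * X^(a*4) * gb n (k+1) - X^8 * X^(a*8) * gb n k) * two_eq_zero
    · -- degenerate case k > n
      rcases eq_or_lt_of_le (Nat.succ_le_of_lt hk) with hk1 | hk1
      · -- k = n+1
        rw [← hk1]
        simp only [Nat.succ_eq_add_one]
        rw [gb_eq_zero (by omega : n+1 < n+1+1), show n+1 - (n+1) = 0 by omega,
          Nat.mul_zero, pow_zero]
        linear_combination (-(gb (n+1) (n+1))) * two_eq_zero
      · rw [gb_eq_zero (by omega : n+1 < k+1), gb_eq_zero (by omega : n+1 < k)]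
        ring

lemma gb_pascalB (n k : ℕ) :
    gb (n+1) (k+1) = X^(4*(k+1)) * gb n (k+1) + gb n k := by
  rw [gb_succ]
  linear_combination gb_absorb n k
    + (X^(4*(n-k)) * gb n k - X^(4*(k+1)) * gb n (k+1)) * two_eq_zero

lemma gb_rec (N j : ℕ) (hj : j ≤ 2*N) :
    gb (2*N+2) (j+2) = (1 + X^(4*(2*N+1))) * gb (2*N) (j+1)
      + X^(4*(j+2)) * gb (2*N) (j+2) + X^(4*(2*N-j)) * gb (2*N) j := by
  obtain ⟨a, ha, h2N⟩ : ∃ a, 2*N - j = a ∧ 2*N = a + j := ⟨2*N - j, rfl, by omega⟩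
  have A1 : gb (2*N+2) (j+2) = gb (2*N+1) (j+2) + X^(4*a) * gb (2*N+1) (j+1) := by
    have := gb_succ (2*N+1) (j+1)
    rw [show 2*N+1 - (j+1) = a by omega] at this
    exact this
  have B1 : gb (2*N+1) (j+2) = X^(4*(j+2)) * gb (2*N) (j+2) + gb (2*N) (j+1) :=
    gb_pascalB (2*N) (j+1)
  have A2 : gb (2*N+1) (j+1) = gb (2*N) (j+1) + X^(4*a) * gb (2*N) j := by
    have := gb_succ (2*N) j
    rw [show 2*N - j = a from ha] at this
    exact this
  have ABS := gb_absorb (2*N) j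
  rw [show 2*N - j = a from ha] at ABS ⊢
  rw [A1, B1, A2, show 4*(2*N+1) = 4*a + 4*(j+1) by omega]
  linear_combination X^(4*a) * ABS
    + (X^(4*a) * X^(4*a) * gb (2*N) j - X^(4*a) * X^(4*(j+1)) * gb (2*N) (j+1)) * two_eq_zero

lemma gb_mul_prod (n k : ℕ) (h : k ≤ n) :
    gb n k * ∏ i ∈ range k, (1 + X^(4*(i+1)))
      = ∏ i ∈ range k, (1 + (X:A2)^(4*(n-k+i+1))) := by
  induction k with
  | zero => simp [gb_zero]
  | succ k ih =>
    have hkn : k ≤ n := by omega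
    obtain ⟨b, hb, hb2⟩ : ∃ b, n - (k+1) = b ∧ n - k = b + 1 := ⟨n - (k+1), rfl, by omega⟩
    rw [Finset.prod_range_succ]
    calc gb n (k+1) * ((∏ i ∈ range k, (1+X^(4*(i+1)))) * (1+X^(4*(k+1))))
        = ((1+X^(4*(k+1))) * gb n (k+1)) * ∏ i ∈ range k, (1+X^(4*(i+1))) := by ring
      _ = ((1+X^(4*(n-k))) * gb n k) * ∏ i ∈ range k, (1+X^(4*(i+1))) := by rw [gb_absorb]
      _ = (1+X^(4*(n-k))) * (gb n k * ∏ i ∈ range k, (1+X^(4*(i+1)))) := by ring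
      _ = (1+X^(4*(n-k))) * ∏ i ∈ range k, (1+X^(4*(n-k+i+1))) := by rw [ih hkn]
      _ = (1+X^(4*(b+1))) * ∏ i ∈ range k, (1+X^(4*(b+i+2))) := by
            have hp : (∏ i ∈ range k, ((1:A2)+X^(4*(n-k+i+1))))
                = ∏ i ∈ range k, ((1:A2)+X^(4*(b+i+2))) :=
              Finset.prod_congr rfl fun i _ => by
                rw [show 4*(n-k+i+1) = 4*(b+i+2) by omega]
            rw [hp, hb2]
      _ = ∏ i ∈ range (k+1), (1+X^(4*(n-(k+1)+i+1))) := by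
            have hp : (∏ i ∈ range k, ((1:A2)+X^(4*(n-(k+1)+(i+1)+1))))
                = ∏ i ∈ range k, ((1:A2)+X^(4*(b+i+2))) :=
              Finset.prod_congr rfl fun i _ => by
                rw [show 4*(n-(k+1)+(i+1)+1) = 4*(b+i+2) by omega]
            rw [Finset.prod_range_succ', hp, show 4*(n-(k+1)+0+1) = 4*(b+1) by omega,
              mul_comm ((1:A2)+X^(4*(b+1))) _]

/-- the `z^j`-coefficient in the finite Jacobi triple product -/
noncomputable def r (N j : ℕ) : A2 :=
  X^(2*(Int.natAbs ((j:ℤ) - N))^2) * gb (2*N) j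

lemma r_eq_zero {N j : ℕ} (h : 2*N < j) : r N j = 0 := by
  rw [r, gb_eq_zero h, mul_zero]

lemma r_claim0 (N : ℕ) : r (N+1) 0 = X^(4*N+2) * r N 0 := by
  rw [r, r, gb_zero, gb_zero, mul_one, mul_one, ← pow_add]
  congr 1
  push_cast
  have h1 : Int.natAbs ((0:ℤ) - ((N:ℤ)+1)) = N+1 := by omega
  have h2 : Int.natAbs ((0:ℤ) - (N:ℤ)) = N := by omega
  rw [h1, h2]; ring

lemma r_claim1 (N : ℕ) :
    r (N+1) 1 = (1 + X^(8*N+4)) * r N 0 + X^(4*N+2) * r N 1 := by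
  rw [r, r, r, gb_zero, mul_one]
  -- gb (2N+2) 1 = gb (2N) 1 + X^(8N) + X^(8N+4)
  have g1 : gb (2*N+2) 1 = gb (2*N) 1 + X^(8*N) + X^(8*N+4) := by
    have e1 : gb (2*N+2) 1 = gb (2*N+1) 1 + X^(4*(2*N+1)) * gb (2*N+1) 0 := by
      have := gb_succ (2*N+1) 0
      rw [show 2*N+1-0 = 2*N+1 by omega] at this
      exact this
    have e2 : gb (2*N+1) 1 = gb (2*N) 1 + X^(4*(2*N)) * gb (2*N) 0 := by
      have := gb_succ (2*N) 0
      rw [show 2*N-0 = 2*N by omega] at this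
      exact this
    rw [e1, e2, gb_zero, gb_zero, show 4*(2*N+1) = 8*N+4 by omega,
      show 4*(2*N) = 8*N by omega]
    ring
  have hA : Int.natAbs ((1:ℤ) - ((N:ℤ)+1)) = N := by omega
  have hB : Int.natAbs ((0:ℤ) - (N:ℤ)) = N := by omega
  push_cast
  rw [show 2*(N+1) = 2*N+2 by omega, g1, hA, hB]
  -- remaining : X^(2*N^2) * (gb (2*N) 1 + X^(8N) + X^(8N+4))
  --   = (1 + X^(8N+4)) * X^(2*N^2) + X^(4N+2) * (X^(2*natAbs(1-N)^2) * gb (2N) 1)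
  have hexp : 4*N+2 + 2*(Int.natAbs ((1:ℤ) - N))^2 = 2*N^2 + 4 := by
    have : ((4*N+2 + 2*(Int.natAbs ((1:ℤ) - N))^2 : ℕ) : ℤ)
        = ((2*N^2 + 4 : ℕ) : ℤ) := by
      push_cast
      rw [sq_abs]
      ring
    exact_mod_cast this
  have hX : (X:A2)^(4*N+2) * (X^(2*(Int.natAbs ((1:ℤ) - N))^2) * gb (2*N) 1)
      = X^(2*N^2) * (X^4 * gb (2*N) 1) := by
    rw [← mul_assoc, ← mul_assoc, ← pow_add, ← pow_add, hexp]
  rw [hX]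
  -- now use absorption : (1 + X^4) * gb (2N) 1 = (1 + X^(8N)) * 1
  have habs := gb_absorb (2*N) 0
  rw [gb_zero, mul_one, show 2*N-0 = 2*N by omega, show 4*(0+1) = 4 by omega,
    show 4*(2*N) = 8*N by omega] at habs
  linear_combination (X:A2)^(2*N^2) * habs
    + (X^(2*N^2) * X^(8*N) - X^4 * X^(2*N^2) * gb (2*N) 1) * two_eq_zero

lemma r_claim2 (N j : ℕ) :
    r (N+1) (j+2) = (1 + X^(8*N+4)) * r N (j+1)
      + X^(4*N+2) * r N (j+2) + X^(4*N+2) * r N j := by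
  rcases le_or_gt j (2*N) with hj | hj
  · rw [r, r, r, r]
    push_cast
    rw [show 2*(N+1) = 2*N+2 by omega]
    rw [show ((j:ℤ) + 2 - ((N:ℤ)+1)) = (j:ℤ) + 1 - N by ring]
    have hexp2 : 4*N+2 + 2*(Int.natAbs ((j:ℤ) + 2 - N))^2
        = 2*(Int.natAbs ((j:ℤ) + 1 - N))^2 + 4*(j+2) := by
      have : ((4*N+2 + 2*(Int.natAbs ((j:ℤ) + 2 - N))^2 : ℕ) : ℤ)
          = ((2*(Int.natAbs ((j:ℤ) + 1 - N))^2 + 4*(j+2) : ℕ) : ℤ) := by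
        push_cast
        rw [sq_abs, sq_abs]
        ring
      exact_mod_cast this
    have hexp0 : 4*N+2 + 2*(Int.natAbs ((j:ℤ) - N))^2
        = 2*(Int.natAbs ((j:ℤ) + 1 - N))^2 + 4*(2*N-j) := by
      have : ((4*N+2 + 2*(Int.natAbs ((j:ℤ) - N))^2 : ℕ) : ℤ)
          = ((2*(Int.natAbs ((j:ℤ) + 1 - N))^2 + 4*(2*N-j) : ℕ) : ℤ) := by
        push_cast [hj]
        rw [sq_abs, sq_abs]
        ring
      exact_mod_cast this
    have hA : (X:A2)^(4*N+2) * (X^(2*(Int.natAbs ((j:ℤ) + 2 - N))^2) * gb (2*N) (j+2))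
        = X^(2*(Int.natAbs ((j:ℤ) + 1 - N))^2) * (X^(4*(j+2)) * gb (2*N) (j+2)) := by
      rw [← mul_assoc, ← mul_assoc, ← pow_add, ← pow_add, hexp2]
    have hB : (X:A2)^(4*N+2) * (X^(2*(Int.natAbs ((j:ℤ) - N))^2) * gb (2*N) j)
        = X^(2*(Int.natAbs ((j:ℤ) + 1 - N))^2) * (X^(4*(2*N-j)) * gb (2*N) j) := by
      rw [← mul_assoc, ← mul_assoc, ← pow_add, ← pow_add, hexp0]
    rw [gb_rec N j hj, show 4*(2*N+1) = 8*N+4 by omega, hA, hB]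
    ring
  · rw [r_eq_zero (show 2*(N+1) < j+2 by omega), r_eq_zero (show 2*N < j+1 by omega),
      r_eq_zero (show 2*N < j+2 by omega), r_eq_zero hj]
    ring

open Polynomial in
noncomputable def jtpSum (N : ℕ) : Polynomial A2 :=
  ∑ j ∈ range (2*N+1), Polynomial.monomial j (r N j)

open Polynomial in
lemma jtpSum_coeff (N i : ℕ) : (jtpSum N).coeff i = r N i := by
  rw [jtpSum, Polynomial.finset_sum_coeff]
  simp only [Polynomial.coeff_monomial]
  rcases lt_or_ge i (2*N+1) with hi | hi
  · rw [Finset.sum_ite_eq' (range (2*N+1)) i (fun j => r N j)]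
    simp [Finset.mem_range.mpr hi]
  · rw [Finset.sum_eq_zero, r_eq_zero (by omega : 2*N < i)]
    intro j hj
    rw [if_neg]
    have := Finset.mem_range.mp hj
    omega

open Polynomial in
theorem jtp (N : ℕ) :
    ∏ k ∈ range N, ((1 + Polynomial.C ((X:A2)^(4*k+2)) * Polynomial.X)
      * (Polynomial.X + Polynomial.C ((X:A2)^(4*k+2)))) = jtpSum N := by
  induction N with
  | zero =>
    rw [Finset.prod_range_zero, jtpSum]
    have : r 0 0 = 1 := by
      rw [r]; simp [gb_zero]
    simp [this]
  | succ N ih =>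
    rw [Finset.prod_range_succ, ih]
    have expand : jtpSum N * ((1 + Polynomial.C ((X:A2)^(4*N+2)) * Polynomial.X)
        * (Polynomial.X + Polynomial.C ((X:A2)^(4*N+2))))
        = jtpSum N * Polynomial.C ((X:A2)^(4*N+2))
          + (jtpSum N * Polynomial.C (1 + (X:A2)^(4*N+2) * (X:A2)^(4*N+2))) * Polynomial.X^1
          + (jtpSum N * Polynomial.C ((X:A2)^(4*N+2))) * Polynomial.X^2 := by
      rw [map_add, map_mul, map_one]
      ring
    rw [expand]
    refine Polynomial.ext fun i => ?_
    rw [Polynomial.coeff_add, Polynomial.coeff_add, jtpSum_coeff,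
      Polynomial.coeff_mul_C, Polynomial.coeff_mul_X_pow', Polynomial.coeff_mul_X_pow',
      Polynomial.coeff_mul_C, Polynomial.coeff_mul_C, jtpSum_coeff]
    match i with
    | 0 =>
      norm_num
      rw [r_claim0]; ring
    | 1 =>
      norm_num
      rw [jtpSum_coeff, r_claim1]; ring
    | (j+2) =>
      rw [if_pos (by omega : 1 ≤ j+2), if_pos (by omega : 2 ≤ j+2),
        show j+2-1 = j+1 by omega, show j+2-2 = j by omega,
        jtpSum_coeff, jtpSum_coeff, r_claim2]
      ring

lemma jtp_eval (N : ℕ) :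
    (X:A2)^N * ∏ j ∈ range (2*N), (1 + (X:A2)^(2*j+1))
      = ∑ j ∈ range (2*N+1), (X:A2)^j * r N j := by
  have h := congrArg (Polynomial.eval (X:A2)) (jtp N)
  rw [Polynomial.eval_prod] at h
  rw [jtpSum, Polynomial.eval_finset_sum] at h
  simp only [Polynomial.eval_mul, Polynomial.eval_add, Polynomial.eval_one,
    Polynomial.eval_C, Polynomial.eval_X, Polynomial.eval_monomial] at h
  -- h : ∏ k ∈ range N, (1 + X^(4k+2) * X) * (X + X^(4k+2)) = ∑ j, r N j * X^j
  have key : ∀ n : ℕ, (∏ k ∈ range n, ((1 + (X:A2)^(4*k+2) * X) * (X + (X:A2)^(4*k+2))))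
      = (X:A2)^n * ∏ j ∈ range (2*n), (1 + (X:A2)^(2*j+1)) := by
    intro n
    induction n with
    | zero => simp
    | succ n ihn =>
      rw [Finset.prod_range_succ, ihn, show 2*(n+1) = (2*n+1)+1 by omega,
        Finset.prod_range_succ, Finset.prod_range_succ,
        show 2*(2*n)+1 = 4*n+1 by omega, show 2*(2*n+1)+1 = 4*n+3 by omega,
        show (4*n+2) = (4*n+1)+1 by omega, show (4*n+3) = ((4*n+1)+1)+1 by omega]
      ring
  rw [key] at h
  rw [h]
  exact Finset.sum_congr rfl fun j _ => by ring

/-- coefficient `0` of products of `1 + X^positive` is `1` -/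
lemma constCoeff_prod (s : Finset ℕ) (d : ℕ → ℕ) (hd : ∀ k ∈ s, 0 < d k) :
    (coeff 0) (∏ k ∈ s, (1 + (X:A2)^(d k))) = 1 := by
  classical
  induction s using Finset.induction_on with
  | empty => simp
  | insert a s' hmem ih =>
    rw [Finset.prod_insert hmem, PowerSeries.coeff_zero_eq_constantCoeff, map_mul]
    rw [PowerSeries.coeff_zero_eq_constantCoeff] at ih
    rw [ih (fun k hk => hd k (Finset.mem_insert_of_mem hk))]
    have : constantCoeff ((X:A2)^(d a)) = 0 := by
      rw [map_pow, PowerSeries.constantCoeff_X, zero_pow (by have := hd a (Finset.mem_insert_self a s'); omega)]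
    rw [mul_one, map_add, map_one, this, add_zero]

lemma my_add_sq (a b : A2) : (a + b)^2 = a^2 + b^2 := by
  have h : (a+b)^2 = a^2 + b^2 + 2*(a*b) := by ring
  rw [h, two_eq_zero]; ring

lemma one_add_pow24 (f : A2) : (1 + f)^24 = (1 + f^8) * (1 + f^16) := by
  have key : ∀ g : A2, (1+g)^2 = 1 + g^2 := fun g => by
    have := my_add_sq 1 g; simpa using this
  have h2 : (1+f)^2 = 1 + f^2 := key f
  have h4 : (1+f)^4 = 1 + f^4 := by
    have e : (1+f)^4 = ((1+f)^2)^2 := by ring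
    rw [e, h2, key (f^2)]; ring_nf
  have h8 : (1+f)^8 = 1 + f^8 := by
    have e : (1+f)^8 = ((1+f)^4)^2 := by ring
    rw [e, h4, key (f^4)]; ring_nf
  have h16 : (1+f)^16 = 1 + f^16 := by
    have e : (1+f)^16 = ((1+f)^8)^2 := by ring
    rw [e, h8, key (f^8)]; ring_nf
  calc (1+f)^24 = (1+f)^8 * (1+f)^16 := by ring
  _ = (1 + f^8) * (1 + f^16) := by rw [h8, h16]

lemma prod_one_add_X_pow (s : Finset ℕ) (e : ℕ → ℕ) :
    (∏ k ∈ s, (1 + (X : A2)^(e k))) = ∑ t ∈ s.powerset, (X : A2)^(∑ k ∈ t, e k) := by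
  have := Finset.prod_add (fun k => (X : A2)^(e k)) (fun _ => (1 : A2)) s
  simp only [add_comm ((1:A2)) _] at *
  rw [this]
  refine Finset.sum_congr rfl fun t _ => ?_
  rw [Finset.prod_const_one, mul_one, Finset.prod_pow_eq_pow_sum]

lemma coeff_prod_one_add_X_pow (s : Finset ℕ) (e : ℕ → ℕ) (M : ℕ) :
    (coeff M) (∏ k ∈ s, (1 + (X : A2)^(e k)))
      = ∑ t ∈ s.powerset, (if ∑ k ∈ t, e k = M then 1 else 0) := by
  rw [prod_one_add_X_pow, map_sum]
  refine Finset.sum_congr rfl fun t _ => ?_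
  rw [PowerSeries.coeff_X_pow]
  simp [eq_comm]

lemma coeff_mul_junk (M : ℕ) (f : A2) (s : Finset ℕ) (d : ℕ → ℕ)
    (h : ∀ k ∈ s, M < d k) :
    (coeff M) (f * ∏ k ∈ s, (1 + (X : A2)^(d k))) = coeff M f := by
  classical
  induction s using Finset.induction_on generalizing f with
  | empty => simp
  | insert a s' hnotmem ih =>
    rw [Finset.prod_insert hnotmem, ← mul_assoc]
    rw [ih (f * (1 + X ^ d a)) (fun k hk => h k (Finset.mem_insert_of_mem hk))]
    rw [mul_add, mul_one, map_add, PowerSeries.coeff_mul_X_pow']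
    have : ¬ (d a ≤ M) := by push_neg; exact h a (Finset.mem_insert_self a s')
    rw [if_neg this, add_zero]

lemma coeff_junk_zero (t : ℕ) (ht : 0 < t) (s : Finset ℕ) (d : ℕ → ℕ)
    (h : ∀ k ∈ s, t < d k) :
    (coeff t) (∏ k ∈ s, (1 + (X : A2)^(d k))) = 0 := by
  have := coeff_mul_junk t 1 s d h
  rw [one_mul] at this
  rw [this, PowerSeries.coeff_one, if_neg (by omega)]

lemma e_cast (j N : ℕ) :
    ((j + 2*(Int.natAbs ((j:ℤ) - N))^2 : ℕ) : ℤ) = (j:ℤ) + 2*((j:ℤ)-(N:ℤ))^2 := by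
  push_cast
  rw [sq_abs]

lemma coeff_term (M j : ℕ) (hj : j ≤ 2*(M+1)) :
    (coeff (M+(M+1)))
        ((X^j * r (M+1) j) * ∏ i ∈ range (2*(M+1)), (1+(X:A2)^(4*(i+1))))
      = if j + 2*(Int.natAbs ((j:ℤ) - (M+1:ℕ)))^2 = M+(M+1) then 1 else 0 := by
  set N := M+1 with hN
  set m2 := (Int.natAbs ((j:ℤ) - (N:ℕ)))^2 with hm2
  have hr : (X^j * r N j) * ∏ i ∈ range (2*N), (1+(X:A2)^(4*(i+1)))
      = X^(j + 2*m2) * (gb (2*N) j * ∏ i ∈ range (2*N), (1+(X:A2)^(4*(i+1)))) := by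
    rw [r, pow_add]; ring
  have hgbF : gb (2*N) j * ∏ i ∈ range (2*N), (1+(X:A2)^(4*(i+1)))
      = (∏ i ∈ range j, (1+(X:A2)^(4*(2*N-j+i+1))))
        * ∏ i ∈ Ico j (2*N), (1+(X:A2)^(4*(i+1))) := by
    rw [← Finset.prod_range_mul_prod_Ico (fun i => (1+(X:A2)^(4*(i+1)))) hj,
      ← mul_assoc, gb_mul_prod (2*N) j hj]
  rw [hr, PowerSeries.coeff_X_pow_mul']
  rcases le_or_gt (j + 2*m2) (M+N) with hle | hgt
  · rw [if_pos hle]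
    rcases eq_or_lt_of_le hle with heq | hlt
    · rw [heq, if_pos rfl, Nat.sub_self, hgbF, PowerSeries.coeff_zero_eq_constantCoeff,
        map_mul, ← PowerSeries.coeff_zero_eq_constantCoeff,
        constCoeff_prod _ _ (fun k _ => by omega),
        constCoeff_prod _ _ (fun k _ => by omega), mul_one]
    · rw [if_neg (by omega)]
      set t := M + N - (j + 2*m2) with ht
      have ht0 : 0 < t := by omega
      -- arithmetic bounds
      have hcast : (m2 : ℤ) = ((j:ℤ)-(N:ℤ))^2 := by
        rw [hm2]; push_cast; rw [sq_abs]
      have htz : (t:ℤ) = (M:ℤ) + N - ((j:ℤ) + 2*((j:ℤ)-(N:ℤ))^2) := by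
        rw [ht]
        have : ((j + 2*m2 : ℕ) : ℤ) = (j:ℤ) + 2*((j:ℤ)-(N:ℤ))^2 := by
          push_cast; rw [hcast]
        omega
      have hNM : (N:ℤ) = (M:ℤ) + 1 := by rw [hN]; push_cast; ring
      have hb1 : t < 4*(j+1) := by
        have : (t:ℤ) < 4*((j:ℤ)+1) := by
          rw [htz, hNM]
          nlinarith [sq_nonneg (4*((j:ℤ)-(M:ℤ)-1)+5), Int.natCast_nonneg M]
        exact_mod_cast this
      have hb2 : t < 4*(2*N-j+1) := by
        have h2 : ((2*N-j+1 : ℕ):ℤ) = 2*(N:ℤ) - j + 1 := by omega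
        have : (t:ℤ) < 4*(2*(N:ℤ) - (j:ℤ) + 1) := by
          rw [htz, hNM]
          nlinarith [sq_nonneg (4*((j:ℤ)-(M:ℤ)-1)-3), Int.natCast_nonneg M]
        rw [← h2] at this
        exact_mod_cast this
      rw [hgbF]
      rw [coeff_mul_junk t _ _ _ (fun k hk => by
        have := (Finset.mem_Ico.mp hk).1
        omega)]
      rw [coeff_junk_zero t ht0 _ _ (fun k hk => by
        have := Finset.mem_range.mp hk
        omega)]
  · rw [if_neg (by omega), if_neg (by omega)]

lemma e_inj (M j j' : ℕ)
    (h : j + 2*(Int.natAbs ((j:ℤ) - (M+1:ℕ)))^2 = M+(M+1))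
    (h' : j' + 2*(Int.natAbs ((j':ℤ) - (M+1:ℕ)))^2 = M+(M+1)) : j = j' := by
  have hz := congrArg (fun x : ℕ => (x:ℤ)) h
  have hz' := congrArg (fun x : ℕ => (x:ℤ)) h'
  simp only [e_cast] at hz hz'
  set u := (j:ℤ) - ((M+1:ℕ):ℤ) with hu
  set u' := (j':ℤ) - ((M+1:ℕ):ℤ) with hu'
  have key : (u - u') * (2*u + 2*u' + 1) = 0 := by
    have e1 : (j:ℤ) = u + ((M+1:ℕ):ℤ) := by rw [hu]; ring
    have e1' : (j':ℤ) = u' + ((M+1:ℕ):ℤ) := by rw [hu']; ring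
    rw [e1] at hz; rw [e1'] at hz'
    linear_combination hz - hz'
  rcases mul_eq_zero.mp key with h0 | h0
  · omega
  · omega

open scoped Classical in
theorem core_coeff (M : ℕ) :
    (coeff M) ((∏ j ∈ range (2*(M+1)), (1 + (X:A2)^(2*j+1)))
        * ∏ i ∈ range (2*(M+1)), (1 + (X:A2)^(4*(i+1))))
      = if ∃ c : ℕ, c*(c+1) = 2*M then 1 else 0 := by
  classical
  set N := M+1 with hN
  have h1 : (X:A2)^N * ((∏ j ∈ range (2*N), (1 + (X:A2)^(2*j+1)))
        * ∏ i ∈ range (2*N), (1+(X:A2)^(4*(i+1))))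
      = ∑ j ∈ range (2*N+1), (X^j * r N j) * ∏ i ∈ range (2*N), (1+(X:A2)^(4*(i+1))) := by
    rw [← Finset.sum_mul, ← jtp_eval]; ring
  have h2 := congrArg (coeff (M+N)) h1
  rw [PowerSeries.coeff_X_pow_mul] at h2
  rw [h2, map_sum, Finset.sum_congr rfl (fun j hj => coeff_term M j (by
    have := Finset.mem_range.mp hj; omega))]
  -- counting
  by_cases hex : ∃ c : ℕ, c*(c+1) = 2*M
  · rw [if_pos hex]
    obtain ⟨c, hc⟩ := hex
    rcases Nat.even_or_odd c with ⟨d, hd⟩ | ⟨d, hd⟩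
    · -- c = 2d, M = 2d² + d, j₀ = N + d
      have hM : M = 2*d^2 + d := by nlinarith [hc]
      have hdM : d ≤ M := by nlinarith
      refine Finset.sum_eq_single_of_mem (N + d) (Finset.mem_range.mpr (by omega)) ?_ |>.trans ?_
      · intro j hjr hne
        rw [if_neg]
        intro habs
        have : Int.natAbs (((N+d:ℕ):ℤ) - (N:ℕ)) = d := by push_cast; omega
        have he0 : (N+d) + 2*(Int.natAbs (((N+d:ℕ):ℤ) - (N:ℕ)))^2 = M+N := by
          rw [this]; omega
        exact hne (e_inj M j (N+d) habs he0)
      · rw [if_pos]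
        have : Int.natAbs (((N+d:ℕ):ℤ) - (N:ℕ)) = d := by push_cast; omega
        rw [this]; omega
    · -- c = 2d+1, M = 2d²+3d+1, j₀ = N - (d+1)
      have hM : M = 2*d^2 + 3*d + 1 := by nlinarith [hc]
      have hdM : d + 1 ≤ M := by nlinarith
      have hj0 : N - (d+1) + (d+1) = N := by omega
      have hcastN : ((N-(d+1):ℕ):ℤ) = (N:ℤ) - (d+1) := by omega
      refine Finset.sum_eq_single_of_mem (N - (d+1)) (Finset.mem_range.mpr (by omega)) ?_ |>.trans ?_
      · intro j hjr hne
        rw [if_neg]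
        intro habs
        have hna : Int.natAbs (((N-(d+1):ℕ):ℤ) - (N:ℕ)) = d+1 := by
          rw [hcastN]; omega
        have he0 : (N-(d+1)) + 2*(Int.natAbs (((N-(d+1):ℕ):ℤ) - (N:ℕ)))^2 = M+N := by
          rw [hna, show (d+1)^2 = d^2+2*d+1 by ring]
          omega
        exact hne (e_inj M j (N-(d+1)) habs he0)
      · rw [if_pos]
        have hna : Int.natAbs (((N-(d+1):ℕ):ℤ) - (N:ℕ)) = d+1 := by
          rw [hcastN]; omega
        rw [hna, show (d+1)^2 = d^2+2*d+1 by ring]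
        omega
  · rw [if_neg hex]
    refine Finset.sum_eq_zero fun j hjr => ?_
    rw [if_neg]
    intro habs
    apply hex
    have hz := congrArg (fun x : ℕ => (x:ℤ)) habs
    simp only [e_cast] at hz
    set u := (j:ℤ) - ((N:ℕ):ℤ) with hu
    have hMu : 2*u^2 + u = M := by
      have e1 : (j:ℤ) = u + ((N:ℕ):ℤ) := by rw [hu]; ring
      rw [e1] at hz
      have hNM : ((N:ℕ):ℤ) = (M:ℤ)+1 := by rw [hN]; push_cast; ring
      rw [hNM] at hz
      push_cast at hz
      linarith [hz]
    rcases le_or_gt 0 u with hu0 | hu0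
    · refine ⟨(2*u).toNat, ?_⟩
      have : ((2*u).toNat : ℤ) = 2*u := Int.toNat_of_nonneg (by omega)
      have hcast : (((2*u).toNat * ((2*u).toNat+1) : ℕ) : ℤ) = 2*u*(2*u+1) := by
        push_cast [this]; ring
      have : (((2*u).toNat * ((2*u).toNat+1) : ℕ) : ℤ) = ((2*M : ℕ) : ℤ) := by
        rw [hcast]; push_cast; linear_combination 2*hMu
      exact_mod_cast this
    · refine ⟨(-2*u-1).toNat, ?_⟩
      have : ((-2*u-1).toNat : ℤ) = -2*u-1 := Int.toNat_of_nonneg (by omega)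
      have hcast : (((-2*u-1).toNat * ((-2*u-1).toNat+1) : ℕ) : ℤ) = (-2*u-1)*(-2*u) := by
        push_cast [this]; ring
      have : (((-2*u-1).toNat * ((-2*u-1).toNat+1) : ℕ) : ℤ) = ((2*M : ℕ) : ℤ) := by
        rw [hcast]; push_cast; linear_combination 2*hMu
      exact_mod_cast this

noncomputable def oddP (t : ℕ) : A2 := ∏ j ∈ range t, (1 + (X:A2)^(2*j+1))
noncomputable def evenP (t : ℕ) : A2 := ∏ k ∈ range t, (1 + (X:A2)^(2*k+2))
noncomputable def fP (t : ℕ) : A2 := ∏ i ∈ range t, (1 + (X:A2)^(4*(i+1)))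

lemma icc_split (L : ℕ) :
    (∏ k ∈ Icc 1 L, (1 + (X:A2)^k)) = oddP ((L+1)/2) * evenP (L/2) := by
  induction L with
  | zero => simp [oddP, evenP]
  | succ L ih =>
    rw [Finset.prod_Icc_succ_top (by omega), ih]
    rcases Nat.even_or_odd L with ⟨c, hc⟩ | ⟨c, hc⟩
    · -- L even, L+1 odd : goes to oddP
      have h1 : (L+1+1)/2 = (L+1)/2 + 1 := by omega
      have h2 : (L+1)/2 = L/2 := by omega
      rw [h1, h2, oddP, oddP, Finset.prod_range_succ, show 2*(L/2)+1 = L+1 by omega]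
      ring
    · -- L odd, L+1 even : goes to evenP
      have h1 : (L+1+1)/2 = (L+1)/2 := by omega
      have h2 : (L+1)/2 = L/2 + 1 := by omega
      rw [h1, h2, evenP, evenP, Finset.prod_range_succ, show 2*(L/2)+2 = L+1 by omega]
      ring

lemma icc_even (L : ℕ) :
    (∏ k ∈ Icc 1 L, (1 + (X:A2)^(2*k))) = evenP L := by
  rw [evenP, show Icc 1 L = Ico 1 (L+1) by rw [Finset.Ico_add_one_right_eq_Icc],
    Finset.prod_Ico_eq_prod_range, show L+1-1 = L by omega]
  exact Finset.prod_congr rfl fun k _ => by rw [show 2*(1+k) = 2*k+2 by omega]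

lemma evenP_sq (t : ℕ) : evenP t * evenP t = fP t := by
  rw [evenP, fP, ← Finset.prod_mul_distrib]
  refine Finset.prod_congr rfl fun k _ => ?_
  have := my_add_sq 1 ((X:A2)^(2*k+2))
  calc (1 + (X:A2)^(2*k+2)) * (1 + X^(2*k+2)) = (1 + (X:A2)^(2*k+2))^2 := by ring
  _ = 1^2 + ((X:A2)^(2*k+2))^2 := this
  _ = 1 + (X:A2)^(4*(k+1)) := by rw [← pow_mul]; norm_num; congr 1; omega

lemma coeff_oddP_fP_shift (M a b a' b' : ℕ) (haa : a ≤ a') (hbb : b ≤ b')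
    (hMa : M ≤ a) (hMb : M ≤ b) :
    (coeff M) (oddP a' * fP b') = (coeff M) (oddP a * fP b) := by
  have h1 : oddP a' = oddP a * ∏ j ∈ Ico a a', (1 + (X:A2)^(2*j+1)) := by
    rw [oddP, oddP, Finset.prod_range_mul_prod_Ico _ haa]
  have h2 : fP b' = fP b * ∏ i ∈ Ico b b', (1 + (X:A2)^(4*(i+1))) := by
    rw [fP, fP, Finset.prod_range_mul_prod_Ico _ hbb]
  rw [h1, h2, show (oddP a * ∏ j ∈ Ico a a', (1 + (X:A2)^(2*j+1)))
      * (fP b * ∏ i ∈ Ico b b', (1 + (X:A2)^(4*(i+1))))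
      = ((oddP a * fP b) * ∏ i ∈ Ico b b', (1 + (X:A2)^(4*(i+1))))
        * ∏ j ∈ Ico a a', (1 + (X:A2)^(2*j+1)) by ring]
  rw [coeff_mul_junk M _ _ _ (fun j hj => by have := (Finset.mem_Ico.mp hj).1; omega)]
  rw [coeff_mul_junk M _ _ _ (fun i hi => by have := (Finset.mem_Ico.mp hi).1; omega)]

open scoped Classical in
lemma coeff_oddP_fP (M a b : ℕ) (hMa : M ≤ a) (hMb : M ≤ b) :
    (coeff M) (oddP a * fP b)
      = if ∃ c : ℕ, c*(c+1) = 2*M then 1 else 0 := by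
  have h1 := coeff_oddP_fP_shift M a b (max a (2*(M+1))) (max b (2*(M+1)))
    (le_max_left _ _) (le_max_left _ _) hMa hMb
  have h2 := coeff_oddP_fP_shift M (2*(M+1)) (2*(M+1)) (max a (2*(M+1))) (max b (2*(M+1)))
    (le_max_right _ _) (le_max_right _ _) (by omega) (by omega)
  rw [← h1, h2]
  exact core_coeff M

lemma coeff_two_prods (s1 s2 : Finset ℕ) (e1 e2 : ℕ → ℕ) (M : ℕ) :
    (coeff M) ((∏ k ∈ s1, (1+(X:A2)^(e1 k))) * ∏ k ∈ s2, (1+(X:A2)^(e2 k)))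
      = ∑ t1 ∈ s1.powerset, ∑ t2 ∈ s2.powerset,
          (if (∑ k ∈ t1, e1 k) + (∑ k ∈ t2, e2 k) = M then 1 else 0) := by
  rw [prod_one_add_X_pow, prod_one_add_X_pow, Finset.sum_mul_sum, map_sum]
  refine Finset.sum_congr rfl fun t1 _ => ?_
  rw [map_sum]
  refine Finset.sum_congr rfl fun t2 _ => ?_
  rw [← pow_add, PowerSeries.coeff_X_pow]
  simp [eq_comm]

lemma scaling (n M : ℕ) (h8 : n - 1 = 8*M) :
    (coeff (n-1)) ((∏ k ∈ Icc 1 n, (1+(X:A2)^(8*k))) * ∏ k ∈ Icc 1 n, (1+(X:A2)^(16*k)))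
      = (coeff M) ((∏ k ∈ Icc 1 n, (1+(X:A2)^k)) * ∏ k ∈ Icc 1 n, (1+(X:A2)^(2*k))) := by
  rw [coeff_two_prods, coeff_two_prods]
  refine Finset.sum_congr rfl fun t1 _ => Finset.sum_congr rfl fun t2 _ => ?_
  have h1 : ∑ k ∈ t1, 8*k = 8 * ∑ k ∈ t1, k := by rw [Finset.mul_sum]
  have h2 : ∑ k ∈ t2, 16*k = 8 * ∑ k ∈ t2, 2*k := by
    rw [Finset.mul_sum]
    exact Finset.sum_congr rfl fun k _ => by ring
  rw [h1, h2]
  by_cases hc : (∑ k ∈ t1, k) + (∑ k ∈ t2, 2*k) = M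
  · rw [if_pos (by omega), if_pos hc]
  · rw [if_neg (by omega), if_neg hc]

lemma scaling_zero (n : ℕ) (h8 : ¬ (n % 8 = 1)) (hn : 1 ≤ n) :
    (coeff (n-1)) ((∏ k ∈ Icc 1 n, (1+(X:A2)^(8*k))) * ∏ k ∈ Icc 1 n, (1+(X:A2)^(16*k)))
      = 0 := by
  rw [coeff_two_prods]
  refine Finset.sum_eq_zero fun t1 _ => Finset.sum_eq_zero fun t2 _ => ?_
  have h1 : ∑ k ∈ t1, 8*k = 8 * ∑ k ∈ t1, k := by rw [Finset.mul_sum]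
  have h2 : ∑ k ∈ t2, 16*k = 8 * ∑ k ∈ t2, 2*k := by
    rw [Finset.mul_sum]
    exact Finset.sum_congr rfl fun k _ => by ring
  rw [h1, h2, if_neg (by omega)]

lemma odd_int_iff_cast (z : ℤ) : Odd z ↔ (z : ZMod 2) = 1 := by
  have h2 : ∀ x : ZMod 2, x = 0 ∨ x = 1 := by decide
  have hz := ZMod.intCast_zmod_eq_zero_iff_dvd z 2
  push_cast at hz
  rw [← Int.not_even_iff_odd, even_iff_two_dvd, ← hz]
  rcases h2 ((z : ZMod 2)) with h | h <;> simp [h]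

lemma odd_sq_mod8 (m : ℕ) (hm : Odd m) : m^2 % 8 = 1 := by
  obtain ⟨c, hc⟩ := hm
  rcases Nat.even_or_odd c with ⟨d, hd⟩ | ⟨d, hd⟩
  · have : m^2 = 8*(2*d^2+d) + 1 := by subst hc hd; ring
    omega
  · have : m^2 = 8*(2*d^2+3*d+1) + 1 := by subst hc hd; ring
    omega

theorem a_odd_iff_odd_square (n : ℕ) (hn : 1 ≤ n) :
    Odd (a n) ↔ ∃ m : ℕ, Odd m ∧ n = m ^ 2 := by
  rw [odd_int_iff_cast]
  have hmap : ((a n : ℤ) : ZMod 2)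
      = (coeff n) ((X : A2) * ∏ k ∈ Icc 1 n, (1 + (X:A2)^k)^24) := by
    have h0 : ((a n : ℤ) : ZMod 2) = (Int.castRingHom (ZMod 2)) (a n) := rfl
    rw [h0, a, ← PowerSeries.coeff_map]
    congr 1
    rw [map_mul, PowerSeries.map_X]
    congr 1
    rw [map_prod]
    refine Finset.prod_congr rfl fun k _ => ?_
    rw [map_pow, map_add, map_one, map_pow, PowerSeries.map_X]
  rw [hmap]
  have hsplit : (∏ k ∈ Icc 1 n, (1 + (X:A2)^k)^24)
      = (∏ k ∈ Icc 1 n, (1+(X:A2)^(8*k))) * ∏ k ∈ Icc 1 n, (1+(X:A2)^(16*k)) := by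
    rw [← Finset.prod_mul_distrib]
    refine Finset.prod_congr rfl fun k _ => ?_
    rw [one_add_pow24, ← pow_mul, ← pow_mul, mul_comm k 8, mul_comm k 16]
  rw [hsplit]
  obtain ⟨n', rfl⟩ : ∃ n', n = n' + 1 := ⟨n - 1, by omega⟩
  rw [PowerSeries.coeff_succ_X_mul]
  by_cases h8 : (n'+1) % 8 = 1
  · set M := n' / 8 with hM
    have h8' : (n'+1) - 1 = 8 * M := by omega
    have hs := scaling (n'+1) M h8'
    rw [show (n'+1)-1 = n' by omega] at hs
    rw [hs, icc_split (n'+1), icc_even (n'+1)]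
    have hsp : evenP (n'+1) = evenP ((n'+1)/2)
        * ∏ k ∈ Ico ((n'+1)/2) (n'+1), (1 + (X:A2)^(2*k+2)) := by
      rw [evenP, evenP, Finset.prod_range_mul_prod_Ico _ (by omega)]
    rw [hsp, show (oddP ((n'+1+1)/2) * evenP ((n'+1)/2))
          * (evenP ((n'+1)/2) * ∏ k ∈ Ico ((n'+1)/2) (n'+1), (1 + (X:A2)^(2*k+2)))
        = ((oddP ((n'+1+1)/2) * (evenP ((n'+1)/2) * evenP ((n'+1)/2)))
          * ∏ k ∈ Ico ((n'+1)/2) (n'+1), (1 + (X:A2)^(2*k+2))) by ring,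
      evenP_sq]
    rw [show oddP ((n'+1+1)/2) * fP ((n'+1)/2)
        * ∏ k ∈ Ico ((n'+1)/2) (n'+1), (1 + (X:A2)^(2*k+2))
        = (oddP ((n'+1+1)/2) * fP ((n'+1)/2))
        * ∏ k ∈ Ico ((n'+1)/2) (n'+1), (1 + (X:A2)^(2*k+2)) from rfl]
    rw [coeff_mul_junk M _ _ _ (fun k hk => by
      have := (Finset.mem_Ico.mp hk).1
      omega)]
    rw [coeff_oddP_fP M _ _ (by omega) (by omega)]
    split_ifs with hc
    · constructor
      · intro _
        obtain ⟨c, hcc⟩ := hc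
        refine ⟨2*c+1, ⟨c, by omega⟩, ?_⟩
        have : (2*c+1)^2 = 4*(c*(c+1))+1 := by ring
        omega
      · intro _; rfl
    · constructor
      · intro h0; exact absurd h0 (by decide)
      · rintro ⟨m, hm, hnm⟩
        exfalso
        obtain ⟨c, hcm⟩ := hm
        apply hc
        refine ⟨c, ?_⟩
        have : (2*c+1)^2 = 4*(c*(c+1))+1 := by ring
        subst hcm
        omega
  · have hs := scaling_zero (n'+1) h8 (by omega)
    rw [show (n'+1)-1 = n' by omega] at hs
    rw [hs]
    constructor
    · intro h0; exact absurd h0 (by decide)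
    · rintro ⟨m, hm, hnm⟩
      have := odd_sq_mod8 m hm
      omega
end

section
/- Let a(n) be the coefficients of q·∏_{n=1}^∞ (1+q^n)^{24} = ∑_{n≥1} a(n)q^n. If n is not congruent to 1 modulo 8, then a(n) is even. -/
open PowerSeries Finset

instance : CharP (PowerSeries (ZMod 2)) 2 :=
  charP_of_injective_ringHom (PowerSeries.C_injective) 2

/-- Supported on multiples of 8. -/
def Pq (f : PowerSeries (ZMod 2)) : Prop :=
  ∀ m : ℕ, ¬ (8 ∣ m) → PowerSeries.coeff m f = 0

lemma Pq_mul {f g : PowerSeries (ZMod 2)} (hf : Pq f) (hg : Pq g) : Pq (f * g) := by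
  intro m hm
  rw [PowerSeries.coeff_mul]
  apply Finset.sum_eq_zero
  rintro ⟨i, j⟩ hij
  rw [Finset.HasAntidiagonal.mem_antidiagonal] at hij
  by_cases h8 : 8 ∣ i
  · have hj : ¬ 8 ∣ j := fun hj => hm (hij ▸ dvd_add h8 hj)
    rw [hg j hj, mul_zero]
  · rw [hf i h8, zero_mul]

lemma Pq_one : Pq 1 := by
  intro m hm
  rw [PowerSeries.coeff_one, if_neg]
  rintro rfl
  exact hm (dvd_zero 8)

lemma Pq_pow {f : PowerSeries (ZMod 2)} (hf : Pq f) (j : ℕ) : Pq (f ^ j) := by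
  induction j with
  | zero => simpa using Pq_one
  | succ j ih => rw [pow_succ]; exact Pq_mul ih hf

lemma Pq_factor (k : ℕ) : Pq (1 + (PowerSeries.X : PowerSeries (ZMod 2)) ^ (8 * k)) := by
  intro m hm
  rw [map_add, PowerSeries.coeff_one, PowerSeries.coeff_X_pow, if_neg, if_neg, add_zero]
  · rintro rfl; exact hm ⟨k, rfl⟩
  · rintro rfl; exact hm (dvd_zero 8)

lemma pow24 (k : ℕ) :
    ((1 : PowerSeries (ZMod 2)) + PowerSeries.X ^ k) ^ 24
      = (1 + PowerSeries.X ^ (8 * k)) ^ 3 := by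
  have h8 : ((1 : PowerSeries (ZMod 2)) + PowerSeries.X ^ k) ^ 8
      = 1 + PowerSeries.X ^ (8 * k) := by
    have := add_pow_char_pow (1 : PowerSeries (ZMod 2)) (PowerSeries.X ^ k) 2 3
    simpa [← pow_mul, mul_comm k 8] using this
  calc ((1 : PowerSeries (ZMod 2)) + PowerSeries.X ^ k) ^ 24
      = (((1 : PowerSeries (ZMod 2)) + PowerSeries.X ^ k) ^ 8) ^ 3 := by ring
    _ = (1 + PowerSeries.X ^ (8 * k)) ^ 3 := by rw [h8]

theorem a_even_of_not_one_mod_eight (n : ℕ) (hn : n % 8 ≠ 1) : Even (a n) := by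
  have hdvd : (2 : ℤ) ∣ a n := by
    have := (ZMod.intCast_zmod_eq_zero_iff_dvd (a n) 2)
    rw [Nat.cast_ofNat] at this
    rw [← this]
    have hmap : ((a n : ZMod 2)) =
        PowerSeries.coeff n
          (PowerSeries.X * ∏ k ∈ Finset.Icc 1 n,
            (1 + (PowerSeries.X : PowerSeries (ZMod 2)) ^ k) ^ 24) := by
      have := PowerSeries.coeff_map (Int.castRingHom (ZMod 2)) n
        (PowerSeries.X * ∏ k ∈ Finset.Icc 1 n,
          (1 + (PowerSeries.X : PowerSeries ℤ) ^ k) ^ 24)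
      unfold a
      rw [show ((PowerSeries.coeff n
          (PowerSeries.X * ∏ k ∈ Finset.Icc 1 n,
            (1 + (PowerSeries.X : PowerSeries ℤ) ^ k) ^ 24) : ℤ) : ZMod 2)
        = (Int.castRingHom (ZMod 2)) _ from rfl, ← this]
      congr 1
      simp [map_prod]
    rw [hmap]
    have hP : Pq (∏ k ∈ Finset.Icc 1 n,
        (1 + (PowerSeries.X : PowerSeries (ZMod 2)) ^ k) ^ 24) := by
      apply Finset.prod_induction _ Pq (fun _ _ => Pq_mul) Pq_one
      intro k _
      rw [pow24]
      exact Pq_pow (Pq_factor k) 3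
    rcases n with _ | m
    · simp
    · rw [PowerSeries.coeff_succ_X_mul]
      apply hP
      intro ⟨c, hc⟩
      apply hn
      omega
  obtain ⟨c, hc⟩ := hdvd
  exact ⟨c, by omega⟩
end
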